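/- arXiv:1804.02219 — 7 statements merged into one kernel-verified Lean document; each statement's English description precedes it below -/
import Mathlib

section
/- Let C be a set of 3-dimensional subspaces (planes) of F_q^6 such that any two distinct members intersect in dimension at most 1 (i.e., minimum subspace distance at least 4). For every hyperplane H of F_q^6, letting r(H) be the number of members of C contained in H, one has |C| ≤ q³(q³+1) + r(H), provided that through every point of F_q^6 there pass at most q³+1 members of C. -/
open Module
open scoped Classical

/-- Bound for sets of planes in `F_q^6` with pairwise intersections of dimension at most 1:
if every point lies on at most `q³+1` members of `C`, then for every hyperplane `H`,
`|C| ≤ q³(q³+1) + r(H)` where `r(H)` is the number of members of `C` contained in `H`. -/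
theorem stmt_6 (K : Type*) [Field K] [Fintype K]
    (C : Finset (Submodule K (Fin 6 → K)))
    (hplane : ∀ X ∈ C, finrank K ↥X = 3)
    (hdist : ∀ X ∈ C, ∀ Y ∈ C, X ≠ Y → finrank K ↥(X ⊓ Y) ≤ 1)
    (hpoint : ∀ P : Submodule K (Fin 6 → K), finrank K ↥P = 1 →
      (C.filter (fun X => P ≤ X)).card ≤ Fintype.card K ^ 3 + 1)
    (H : Submodule K (Fin 6 → K)) (hH : finrank K ↥H = 5) :
    C.card ≤ Fintype.card K ^ 3 * (Fintype.card K ^ 3 + 1)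
      + (C.filter (fun X => X ≤ H)).card := by

  set q := Fintype.card K with hq
  have hq2 : 2 ≤ q := Fintype.one_lt_card
  have hfr6 : finrank K (Fin 6 → K) = 6 := by simp
  have hcard6 : Fintype.card (Fin 6 → K) = q ^ 6 := by
    rw [card_eq_pow_finrank (K := K), hfr6]
  set C' := C.filter (fun X => ¬ X ≤ H) with hC'
  have hsplit : (C.filter (fun X => X ≤ H)).card + C'.card = C.card :=
    Finset.card_filter_add_card_filter_not (s := C) (p := fun X => X ≤ H)
  -- suffices to bound C'
  suffices hmain : C'.card ≤ q ^ 3 * (q ^ 3 + 1) by omega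
  set T : Finset (Fin 6 → K) := Finset.univ.filter (fun v => v ∉ H) with hT
  -- card of T
  have hTsplit : (Finset.univ.filter (fun v : Fin 6 → K => v ∈ H)).card + T.card
      = Finset.univ.card :=
    Finset.card_filter_add_card_filter_not
      (s := (Finset.univ : Finset (Fin 6 → K))) (p := fun v => v ∈ H)
  have hHcard : (Finset.univ.filter (fun v : Fin 6 → K => v ∈ H)).card = q ^ 5 := by
    rw [← Fintype.card_subtype]
    have : Fintype.card ↥H = q ^ 5 := by rw [card_eq_pow_finrank (K := K), hH]
    exact this
  have hTcard : T.card = q ^ 6 - q ^ 5 := by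
    have := Finset.card_univ (α := Fin 6 → K)
    omega
  -- per-X count
  have hX2 : ∀ X ∈ C', (T.filter (fun v => v ∈ X)).card = q ^ 3 - q ^ 2 := by
    intro X hX
    rw [hC', Finset.mem_filter] at hX
    obtain ⟨hXC, hXH⟩ := hX
    have h3 : finrank K ↥X = 3 := hplane X hXC
    have hinf2 : finrank K ↥(X ⊓ H) = 2 := by
      have hsum := Submodule.finrank_sup_add_finrank_inf_eq X H
      have hle : finrank K ↥(X ⊔ H) ≤ 6 := by
        have := Submodule.finrank_le (X ⊔ H)
        rwa [hfr6] at this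
      have hlt : X ⊓ H < X := by
        refine lt_of_le_of_ne inf_le_left (fun h => hXH ?_)
        rw [← h]; exact inf_le_right
      have := Submodule.finrank_lt_finrank_of_lt hlt
      omega
    have hcX : (Finset.univ.filter (fun v => v ∈ X)).card = q ^ 3 := by
      rw [← Fintype.card_subtype]
      have : Fintype.card ↥X = q ^ 3 := by rw [card_eq_pow_finrank (K := K), h3]
      exact this
    have hcXH : ((Finset.univ.filter (fun v => v ∈ X)).filter
        (fun v => v ∈ H)).card = q ^ 2 := by
      rw [Finset.filter_filter, ← Fintype.card_subtype]
      have : Fintype.card ↥(X ⊓ H) = q ^ 2 := by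
        rw [card_eq_pow_finrank (K := K), hinf2]
      rw [← this]
      exact Fintype.card_congr (Equiv.subtypeEquivRight (fun v => by
        simp [Submodule.mem_inf]))
    have hXsplit := Finset.card_filter_add_card_filter_not
      (s := Finset.univ.filter (fun v => v ∈ X)) (p := fun v => v ∈ H)
    have hcomm : (T.filter (fun v => v ∈ X)).card
        = ((Finset.univ.filter (fun v => v ∈ X)).filter (fun v => ¬ v ∈ H)).card := by
      congr 1
      rw [hT, Finset.filter_filter, Finset.filter_filter]
      exact Finset.filter_congr (by tauto)
    omega
  -- per-v bound
  have hv1 : ∀ v ∈ T, (C'.filter (fun X => v ∈ X)).card ≤ q ^ 3 + 1 := by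
    intro v hv
    rw [hT, Finset.mem_filter] at hv
    have hv0 : v ≠ 0 := fun h => hv.2 (h ▸ H.zero_mem)
    have hP : finrank K ↥(Submodule.span K {v}) = 1 := finrank_span_singleton hv0
    refine le_trans (Finset.card_le_card ?_) (hpoint _ hP)
    intro X hX
    rw [Finset.mem_filter] at hX ⊢
    rw [hC', Finset.mem_filter] at hX
    exact ⟨hX.1.1, (Submodule.span_singleton_le_iff_mem v X).mpr hX.2⟩
  -- double counting
  have hdc : ∑ X ∈ C', (T.filter (fun v => v ∈ X)).card
      = ∑ v ∈ T, (C'.filter (fun X => v ∈ X)).card := by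
    simp only [Finset.card_filter]
    exact Finset.sum_comm
  have hlhs : C'.card * (q ^ 3 - q ^ 2) = ∑ X ∈ C', (T.filter (fun v => v ∈ X)).card := by
    rw [Finset.sum_congr rfl hX2, Finset.sum_const, smul_eq_mul]
  have hrhs : ∑ v ∈ T, (C'.filter (fun X => v ∈ X)).card ≤ (q ^ 6 - q ^ 5) * (q ^ 3 + 1) := by
    calc ∑ v ∈ T, (C'.filter (fun X => v ∈ X)).card
        ≤ ∑ _v ∈ T, (q ^ 3 + 1) := Finset.sum_le_sum hv1
      _ = (q ^ 6 - q ^ 5) * (q ^ 3 + 1) := by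
          rw [Finset.sum_const, smul_eq_mul, hTcard]
  have hkey : C'.card * (q ^ 3 - q ^ 2) ≤ (q ^ 6 - q ^ 5) * (q ^ 3 + 1) := by
    rw [hlhs, hdc]; exact hrhs
  -- arithmetic
  have h23 : q ^ 2 < q ^ 3 := by
    have := Nat.pow_lt_pow_right (by omega : 1 < q) (by omega : 2 < 3)
    exact this
  have hfact : (q ^ 6 - q ^ 5) * (q ^ 3 + 1) = (q ^ 3 * (q ^ 3 + 1)) * (q ^ 3 - q ^ 2) := by
    have h1 : q ^ 6 = q ^ 3 * q ^ 3 := by ring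
    have h2 : q ^ 5 = q ^ 3 * q ^ 2 := by ring
    rw [h1, h2, ← Nat.mul_sub]
    exact mul_right_comm _ _ _
  rw [hfact] at hkey
  exact Nat.le_of_mul_le_mul_right hkey (by omega)
end

section
/- Let Q be a point of F_2^7 and let C be a collection of planes of F_2^7, pairwise intersecting in dimension ≤ 1, such that no line through Q is contained in any plane of C and every line of F_2^7 not through Q is contained in at most one plane of C. Then C has at most 371 planes. -/
open Module
open scoped Classical


abbrev V7 := Fin 7 → ZMod 2

lemma zmod2_cases (a : ZMod 2) : a = 0 ∨ a = 1 := by fin_cases a <;> [exact Or.inl rfl; exact Or.inr rfl]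

lemma indep_pair {v w : V7} (hv : v ≠ 0) (hw : w ≠ 0) (hvw : v ≠ w) :
    LinearIndependent (ZMod 2) ![v, w] := by
  rw [LinearIndependent.pair_iff]
  intro s t h
  rcases zmod2_cases s with hs | hs <;> rcases zmod2_cases t with ht | ht <;>
    subst hs <;> subst ht <;> simp_all
  exact hvw (by rw [← sub_eq_zero, ← h, CharTwo.sub_eq_add])

lemma span_pair_rank {v w : V7} (hv : v ≠ 0) (hw : w ≠ 0) (hvw : v ≠ w) :
    finrank (ZMod 2) (Submodule.span (ZMod 2) {v, w}) = 2 := by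
  have h := finrank_span_eq_card (R := ZMod 2) (indep_pair hv hw hvw)
  have hr : Set.range ![v, w] = {v, w} := by
    simp [Matrix.range_cons, Matrix.range_empty, Set.pair_comm]
  rw [hr] at h
  simpa using h

lemma span_pair_eq_line {L : Submodule (ZMod 2) V7} (hL : finrank (ZMod 2) L = 2)
    {v w : V7} (hvL : v ∈ L) (hwL : w ∈ L) (hv : v ≠ 0) (hw : w ≠ 0) (hvw : v ≠ w) :
    Submodule.span (ZMod 2) {v, w} = L := by
  apply Submodule.eq_of_le_of_finrank_eq
  · rw [Submodule.span_le]; intro x hx; rcases hx with h|h <;> simp_all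
  · rw [span_pair_rank hv hw hvw, hL]

noncomputable instance : Fintype (Submodule (ZMod 2) V7) := Fintype.ofFinite _

noncomputable def nz (W : Submodule (ZMod 2) V7) : Finset V7 :=
  Finset.univ.filter (fun v => v ∈ W ∧ v ≠ 0)

lemma nz_card {W : Submodule (ZMod 2) V7} {d : ℕ} (h : finrank (ZMod 2) W = d) :
    (nz W).card = 2 ^ d - 1 := by
  have hc : Fintype.card W = 2 ^ d := by
    rw [card_eq_pow_finrank (K := ZMod 2), h, ZMod.card]
  have h1 : (Finset.univ.filter (fun v : V7 => v ∈ W)).card = 2 ^ d := by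
    rw [← hc, Fintype.card_subtype]
  have h2 : nz W = (Finset.univ.filter (fun v : V7 => v ∈ W)).erase 0 := by
    ext v
    simp [nz, and_comm, Finset.mem_erase]
  rw [h2, Finset.card_erase_of_mem (by simp [W.zero_mem]), h1]

noncomputable def linesIn (W : Submodule (ZMod 2) V7) : Finset (Submodule (ZMod 2) V7) :=
  Finset.univ.filter (fun L => finrank (ZMod 2) L = 2 ∧ L ≤ W)

lemma six_mul_linesIn {W : Submodule (ZMod 2) V7} {d : ℕ} (h : finrank (ZMod 2) W = d) :
    6 * (linesIn W).card = (2 ^ d - 1) * (2 ^ d - 2) := by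
  have key : ((nz W).offDiag).card = ∑ L ∈ linesIn W,
      (((nz W).offDiag).filter (fun p => Submodule.span (ZMod 2) {p.1, p.2} = L)).card := by
    apply Finset.card_eq_sum_card_fiberwise
    intro p hp
    simp only [Finset.mem_coe, Finset.mem_offDiag, nz, Finset.mem_filter, Finset.mem_univ, true_and] at hp
    obtain ⟨⟨h1, h1'⟩, ⟨h2, h2'⟩, hne⟩ := hp
    simp only [Finset.mem_coe, linesIn, Finset.mem_filter, Finset.mem_univ, true_and]
    refine ⟨span_pair_rank h1' h2' hne, ?_⟩
    rw [Submodule.span_le]; intro x hx; rcases hx with hx|hx <;> simp_all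
  have fib : ∀ L ∈ linesIn W,
      (((nz W).offDiag).filter (fun p => Submodule.span (ZMod 2) {p.1, p.2} = L)).card = 6 := by
    intro L hL
    simp only [linesIn, Finset.mem_filter, Finset.mem_univ, true_and] at hL
    obtain ⟨hL2, hLW⟩ := hL
    have heq : (((nz W).offDiag).filter (fun p => Submodule.span (ZMod 2) {p.1, p.2} = L))
        = (nz L).offDiag := by
      ext p
      simp only [Finset.mem_filter, Finset.mem_offDiag, nz, Finset.mem_univ, true_and]
      constructor
      · rintro ⟨⟨⟨h1, h1'⟩, ⟨h2, h2'⟩, hne⟩, hsp⟩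
        refine ⟨⟨?_, h1'⟩, ⟨?_, h2'⟩, hne⟩
        · rw [← hsp]; exact Submodule.subset_span (by simp)
        · rw [← hsp]; exact Submodule.subset_span (by simp)
      · rintro ⟨⟨h1, h1'⟩, ⟨h2, h2'⟩, hne⟩
        exact ⟨⟨⟨hLW h1, h1'⟩, ⟨hLW h2, h2'⟩, hne⟩,
          span_pair_eq_line hL2 h1 h2 h1' h2' hne⟩
    rw [heq, Finset.offDiag_card, nz_card hL2]; norm_num
  rw [Finset.sum_congr rfl fib, Finset.sum_const, smul_eq_mul, mul_comm] at key
  rw [← key, Finset.offDiag_card, nz_card h]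
  have hn : 1 ≤ 2 ^ d := Nat.one_le_two_pow
  rcases Nat.exists_eq_add_of_le hn with ⟨k, hk⟩
  rw [hk]
  cases k with
  | zero => simp
  | succ j =>
    have e1 : 1 + (j + 1) - 1 = j + 1 := by omega
    have e2 : 1 + (j + 1) - 2 = j := by omega
    rw [e1, e2, Nat.mul_succ, Nat.add_sub_cancel]

lemma linesIn_card {W : Submodule (ZMod 2) V7} {d : ℕ} (h : finrank (ZMod 2) W = d) :
    (linesIn W).card = (2 ^ d - 1) * (2 ^ d - 2) / 6 := by
  have := six_mul_linesIn h
  omega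

lemma mem_card {W : Submodule (ZMod 2) V7} {d : ℕ} (h : finrank (ZMod 2) W = d) :
    (Finset.univ.filter (fun v : V7 => v ∈ W)).card = 2 ^ d := by
  have hc : Fintype.card W = 2 ^ d := by
    rw [card_eq_pow_finrank (K := ZMod 2), h, ZMod.card]
  rw [← hc, Fintype.card_subtype]

lemma linesQ_card {Q : Submodule (ZMod 2) V7} (hQ : finrank (ZMod 2) Q = 1) :
    (Finset.univ.filter
      (fun L : Submodule (ZMod 2) V7 => finrank (ZMod 2) L = 2 ∧ Q ≤ L)).card = 63 := by
  set LQ := Finset.univ.filter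
      (fun L : Submodule (ZMod 2) V7 => finrank (ZMod 2) L = 2 ∧ Q ≤ L) with hLQ
  set S := Finset.univ.filter (fun w : V7 => w ∉ Q) with hS
  have hrank : ∀ w : V7, w ∉ Q → finrank (ZMod 2) ↥(Q ⊔ Submodule.span (ZMod 2) {w}) = 2 := by
    intro w hw
    have hw0 : w ≠ 0 := fun h => hw (h ▸ Q.zero_mem)
    have hlt : Q < Q ⊔ Submodule.span (ZMod 2) {w} := by
      refine lt_of_le_of_ne le_sup_left (fun h => hw ?_)
      have : w ∈ Q ⊔ Submodule.span (ZMod 2) {w} :=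
        Submodule.mem_sup_right (Submodule.mem_span_singleton_self w)
      rwa [← h] at this
    have h2 : 2 ≤ finrank (ZMod 2) ↥(Q ⊔ Submodule.span (ZMod 2) {w}) := by
      have := Submodule.finrank_lt_finrank_of_lt hlt
      omega
    have h3 : finrank (ZMod 2) ↥(Q ⊔ Submodule.span (ZMod 2) {w}) ≤ 2 := by
      have := Submodule.finrank_sup_add_finrank_inf_eq Q (Submodule.span (ZMod 2) {w})
      rw [hQ, finrank_span_singleton hw0] at this
      omega
    omega
  have key : S.card = ∑ L ∈ LQ,
      (S.filter (fun w => Q ⊔ Submodule.span (ZMod 2) {w} = L)).card := by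
    apply Finset.card_eq_sum_card_fiberwise
    intro w hw
    simp only [Finset.mem_coe, hS, Finset.mem_filter, Finset.mem_univ, true_and] at hw
    simp only [Finset.mem_coe, hLQ, Finset.mem_filter, Finset.mem_univ, true_and]
    exact ⟨hrank w hw, le_sup_left⟩
  have fib : ∀ L ∈ LQ,
      (S.filter (fun w => Q ⊔ Submodule.span (ZMod 2) {w} = L)).card = 2 := by
    intro L hL
    simp only [hLQ, Finset.mem_filter, Finset.mem_univ, true_and] at hL
    obtain ⟨hL2, hQL⟩ := hL
    have heq : S.filter (fun w => Q ⊔ Submodule.span (ZMod 2) {w} = L)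
        = Finset.univ.filter (fun w : V7 => w ∈ L ∧ w ∉ Q) := by
      ext w
      simp only [hS, Finset.mem_filter, Finset.mem_univ, true_and, Finset.filter_filter]
      constructor
      · rintro ⟨hw, hsp⟩
        refine ⟨?_, hw⟩
        rw [← hsp]
        exact Submodule.mem_sup_right (Submodule.mem_span_singleton_self w)
      · rintro ⟨hwL, hw⟩
        refine ⟨hw, Submodule.eq_of_le_of_finrank_eq ?_ ?_⟩
        · exact sup_le hQL ((Submodule.span_le).2 (by simpa using hwL))
        · rw [hrank w hw, hL2]
    have hsplit := Finset.card_filter_add_card_filter_not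
      (s := Finset.univ.filter (fun w : V7 => w ∈ L)) (p := fun w => w ∈ Q)
    rw [Finset.filter_filter, Finset.filter_filter, mem_card hL2] at hsplit
    have hQpart : (Finset.univ.filter (fun w : V7 => w ∈ L ∧ w ∈ Q)).card = 2 := by
      have : (Finset.univ.filter (fun w : V7 => w ∈ L ∧ w ∈ Q))
          = Finset.univ.filter (fun w : V7 => w ∈ Q) := by
        ext w
        simp only [Finset.mem_filter, Finset.mem_univ, true_and]
        exact ⟨fun h => h.2, fun h => ⟨hQL h, h⟩⟩
      rw [this, mem_card hQ]; norm_num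
    rw [heq]
    omega
  have hScard : S.card = 126 := by
    have hsplit := Finset.card_filter_add_card_filter_not
      (s := (Finset.univ : Finset V7)) (p := fun w => w ∈ Q)
    have h1 : (Finset.univ.filter (fun w : V7 => w ∈ Q)).card = 2 := by rw [mem_card hQ]; norm_num
    have h2 : (Finset.univ : Finset V7).card = 128 := by
      simp [Fintype.card_fun]
    simp only [hS]
    omega
  rw [Finset.sum_congr rfl fib, Finset.sum_const, smul_eq_mul] at key
  rw [hScard] at key
  omega

lemma linesNotQ_card {Q : Submodule (ZMod 2) V7} (hQ : finrank (ZMod 2) Q = 1) :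
    (Finset.univ.filter
      (fun L : Submodule (ZMod 2) V7 => finrank (ZMod 2) L = 2 ∧ ¬ Q ≤ L)).card = 2604 := by
  set A := Finset.univ.filter (fun L : Submodule (ZMod 2) V7 => finrank (ZMod 2) L = 2) with hA
  have hAcard : A.card = 2667 := by
    have : A = linesIn ⊤ := by
      ext L; simp [hA, linesIn, le_top]
    rw [this, linesIn_card (d := 7) (by rw [finrank_top]; simp)]; norm_num
  have hsplit := Finset.card_filter_add_card_filter_not (s := A) (p := fun L => Q ≤ L)
  have e1 : A.filter (fun L => Q ≤ L) = Finset.univ.filter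
      (fun L : Submodule (ZMod 2) V7 => finrank (ZMod 2) L = 2 ∧ Q ≤ L) := by
    rw [hA, Finset.filter_filter]
  have e2 : A.filter (fun L => ¬ Q ≤ L) = Finset.univ.filter
      (fun L : Submodule (ZMod 2) V7 => finrank (ZMod 2) L = 2 ∧ ¬ Q ≤ L) := by
    rw [hA, Finset.filter_filter]
  rw [e1, e2, linesQ_card hQ, hAcard] at hsplit
  omega

lemma exists_hyperplane {Q : Submodule (ZMod 2) V7} (hQ : finrank (ZMod 2) Q = 1) :
    ∃ H : Submodule (ZMod 2) V7, finrank (ZMod 2) H = 6 ∧ ¬ Q ≤ H := by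
  have hQne : Q ≠ ⊥ := by
    intro h; rw [h, finrank_bot] at hQ; exact absurd hQ (by norm_num)
  obtain ⟨q, hqQ, hq0⟩ := Submodule.ne_bot_iff Q |>.1 hQne
  obtain ⟨i, hi⟩ : ∃ i, q i ≠ 0 := by
    by_contra h; push_neg at h; exact hq0 (funext h)
  set φ : V7 →ₗ[ZMod 2] ZMod 2 := LinearMap.proj i with hφ
  refine ⟨LinearMap.ker φ, ?_, ?_⟩
  · have hrn := LinearMap.finrank_range_add_finrank_ker φ
    have hV : finrank (ZMod 2) V7 = 7 := by simp
    have hrle : finrank (ZMod 2) (LinearMap.range φ) ≤ 1 := by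
      have := Submodule.finrank_le (LinearMap.range φ)
      simpa using this
    have hrne : LinearMap.range φ ≠ ⊥ := by
      intro h
      have : φ q = 0 := by
        have : φ q ∈ LinearMap.range φ := LinearMap.mem_range_self φ q
        rwa [h, Submodule.mem_bot] at this
      exact hi this
    have hrpos : 0 < finrank (ZMod 2) (LinearMap.range φ) := by
      rcases Nat.eq_zero_or_pos (finrank (ZMod 2) (LinearMap.range φ)) with h|h
      · exact absurd (Submodule.finrank_eq_zero.1 h) hrne
      · exact h
    omega
  · intro hle
    have : φ q = 0 := hle hqQ
    exact hi this

/-- In `F_2^7`, a partial plane spread avoiding all lines through a fixed point `Q` has at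
most 371 planes: if `C` is a set of planes pairwise intersecting in dimension at most 1,
no line through `Q` is contained in a member of `C`, and every line not through `Q` lies in
at most one member of `C`, then `|C| ≤ 371`. -/
theorem stmt_7 (Q : Submodule (ZMod 2) (Fin 7 → ZMod 2)) (hQ : finrank (ZMod 2) ↥Q = 1)
    (C : Finset (Submodule (ZMod 2) (Fin 7 → ZMod 2)))
    (hplane : ∀ X ∈ C, finrank (ZMod 2) ↥X = 3)
    (hdist : ∀ X ∈ C, ∀ Y ∈ C, X ≠ Y → finrank (ZMod 2) ↥(X ⊓ Y) ≤ 1)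
    (hlineQ : ∀ L : Submodule (ZMod 2) (Fin 7 → ZMod 2), finrank (ZMod 2) ↥L = 2 →
      Q ≤ L → ∀ X ∈ C, ¬ L ≤ X)
    (hline : ∀ L : Submodule (ZMod 2) (Fin 7 → ZMod 2), finrank (ZMod 2) ↥L = 2 →
      ¬ Q ≤ L → (C.filter (fun X => L ≤ X)).card ≤ 1) :
    C.card ≤ 371 := by
  by_contra hcon
  push_neg at hcon
  have hC372 : 372 ≤ C.card := hcon
  set T := Finset.univ.filter
      (fun L : Submodule (ZMod 2) V7 => finrank (ZMod 2) L = 2 ∧ ¬ Q ≤ L) with hT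
  have hTcard : T.card = 2604 := linesNotQ_card hQ
  -- each plane contains exactly 7 lines, all in T
  have hsev : ∀ X ∈ C, (T.filter (fun L => L ≤ X)).card = 7 := by
    intro X hX
    have heq : T.filter (fun L => L ≤ X) = linesIn X := by
      ext L
      simp only [hT, Finset.filter_filter, linesIn, Finset.mem_filter, Finset.mem_univ, true_and]
      constructor
      · rintro ⟨⟨h1, _⟩, h2⟩; exact ⟨h1, h2⟩
      · rintro ⟨h1, h2⟩
        refine ⟨⟨h1, fun hQL => ?_⟩, h2⟩
        exact hlineQ L h1 hQL X hX h2
    rw [heq, linesIn_card (hplane X hX)]; norm_num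
  -- double counting
  have hswap : ∑ L ∈ T, (C.filter (fun X => L ≤ X)).card
      = ∑ X ∈ C, (T.filter (fun L => L ≤ X)).card := by
    simp only [Finset.card_filter]
    exact Finset.sum_comm
  have hS1 : ∑ L ∈ T, (C.filter (fun X => L ≤ X)).card = 7 * C.card := by
    rw [hswap, Finset.sum_congr rfl hsev, Finset.sum_const, smul_eq_mul, mul_comm]
  have hle : ∀ L ∈ T, (C.filter (fun X => L ≤ X)).card ≤ 1 := by
    intro L hL
    simp only [hT, Finset.mem_filter, Finset.mem_univ, true_and] at hL
    exact hline L hL.1 hL.2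
  have hS2 : ∑ L ∈ T, (C.filter (fun X => L ≤ X)).card ≤ 2604 := by
    calc ∑ L ∈ T, (C.filter (fun X => L ≤ X)).card ≤ ∑ L ∈ T, 1 := Finset.sum_le_sum hle
    _ = 2604 := by rw [Finset.sum_const, smul_eq_mul, hTcard, mul_one]
  have hCeq : C.card = 372 := by omega
  -- equality forces exact cover of T
  have hexact : ∀ L ∈ T, (C.filter (fun X => L ≤ X)).card = 1 := by
    have hsumeq : ∑ L ∈ T, (C.filter (fun X => L ≤ X)).card = ∑ L ∈ T, 1 := by
      rw [hS1, hCeq, Finset.sum_const, smul_eq_mul, hTcard, mul_one]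
    exact fun L hL => ((Finset.sum_eq_sum_iff_of_le hle).1 hsumeq) L hL
  -- hyperplane
  obtain ⟨H, hH6, hQH⟩ := exists_hyperplane hQ
  have hHsub : ∀ L ∈ linesIn H, L ∈ T := by
    intro L hL
    simp only [linesIn, Finset.mem_filter, Finset.mem_univ, true_and] at hL
    simp only [hT, Finset.mem_filter, Finset.mem_univ, true_and]
    exact ⟨hL.1, fun h => hQH (h.trans hL.2)⟩
  have hH651 : (linesIn H).card = 651 := by
    rw [linesIn_card hH6]; norm_num
  -- partition the 651 lines of H among the planes of C
  have hpart : (linesIn H).card = ∑ X ∈ C, ((linesIn H).filter (fun L => L ≤ X)).card := by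
    have : (linesIn H).card = ∑ L ∈ linesIn H, (C.filter (fun X => L ≤ X)).card := by
      rw [Finset.card_eq_sum_ones]
      exact Finset.sum_congr rfl (fun L hL => (hexact L (hHsub L hL)).symm)
    rw [this]
    simp only [Finset.card_filter]
    exact Finset.sum_comm
  -- each plane meets H in 1 or 7 lines, ≡ 1 mod 6
  have hmod : ∀ X ∈ C, ((linesIn H).filter (fun L => L ≤ X)).card % 6 = 1 := by
    intro X hX
    have heq : (linesIn H).filter (fun L => L ≤ X) = linesIn (H ⊓ X) := by
      ext L
      simp only [linesIn, Finset.filter_filter, Finset.mem_filter, Finset.mem_univ, true_and,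
        le_inf_iff]
      tauto
    have hd1 : finrank (ZMod 2) (H ⊓ X : Submodule (ZMod 2) V7) ≤ 3 := by
      have := Submodule.finrank_mono (inf_le_right : H ⊓ X ≤ X)
      rw [hplane X hX] at this
      exact this
    have hd2 : 2 ≤ finrank (ZMod 2) (H ⊓ X : Submodule (ZMod 2) V7) := by
      have hsum := Submodule.finrank_sup_add_finrank_inf_eq H X
      have hsup : finrank (ZMod 2) (H ⊔ X : Submodule (ZMod 2) V7) ≤ 7 := by
        have := Submodule.finrank_le (H ⊔ X)
        simpa using this
      rw [hH6, hplane X hX] at hsum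
      omega
    interval_cases hd : (finrank (ZMod 2) (H ⊓ X : Submodule (ZMod 2) V7))
    · rw [heq, linesIn_card hd]; norm_num
    · rw [heq, linesIn_card hd]; norm_num
  -- contradiction mod 6
  have h651 : ∑ X ∈ C, ((linesIn H).filter (fun L => L ≤ X)).card = 651 := by
    rw [← hH651]; exact hpart.symm
  have hm : (∑ X ∈ C, ((linesIn H).filter (fun L => L ≤ X)).card) % 6 = 0 := by
    rw [Finset.sum_nat_mod, Finset.sum_congr rfl hmod, Finset.sum_const, smul_eq_mul, mul_one,
      hCeq]
  rw [h651] at hm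
  norm_num at hm
end

section
/- Let C be a collection of lines and planes in F_2^7 such that any two distinct members are disjoint (intersect trivially), and suppose every point of F_2^7 lies on at most 21 planes of C. If Δ₃ is the number of lines and Δ₄ the number of planes in C, then Δ₄ ≤ 3·(127 − 3Δ₃), i.e., Δ₄ ≤ 381 − 9Δ₃. -/
open Module
open scoped Classical

/-- Let `C` be a collection of lines and planes in `F_2^7`, pairwise intersecting trivially,
such that every point lies on at most 21 planes of `C`. If `Δ₃` is the number of lines and
`Δ₄` the number of planes of `C`, then `Δ₄ ≤ 381 − 9·Δ₃`. -/
theorem stmt_8 (C : Finset (Submodule (ZMod 2) (Fin 7 → ZMod 2)))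
    (hdim : ∀ X ∈ C, finrank (ZMod 2) ↥X = 2 ∨ finrank (ZMod 2) ↥X = 3)
    (hdisj : ∀ X ∈ C, ∀ Y ∈ C, X ≠ Y → X ⊓ Y = ⊥)
    (hpoint : ∀ P : Submodule (ZMod 2) (Fin 7 → ZMod 2), finrank (ZMod 2) ↥P = 1 →
      (C.filter (fun (X : Submodule (ZMod 2) (Fin 7 → ZMod 2)) => finrank (ZMod 2) ↥X = 3 ∧ P ≤ X)).card ≤ 21) :
    ((C.filter (fun (X : Submodule (ZMod 2) (Fin 7 → ZMod 2)) => finrank (ZMod 2) ↥X = 3)).card : ℤ)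
      ≤ 381 - 9 * (C.filter (fun (X : Submodule (ZMod 2) (Fin 7 → ZMod 2)) => finrank (ZMod 2) ↥X = 2)).card := by
  classical
  set L := C.filter (fun (X : Submodule (ZMod 2) (Fin 7 → ZMod 2)) => finrank (ZMod 2) ↥X = 2) with hL
  set P := C.filter (fun (X : Submodule (ZMod 2) (Fin 7 → ZMod 2)) => finrank (ZMod 2) ↥X = 3) with hP
  set S : Submodule (ZMod 2) (Fin 7 → ZMod 2) → Finset (Fin 7 → ZMod 2) :=
    fun X => (Finset.univ.filter (fun v => v ∈ X)).erase 0 with hS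
  -- cardinality of S X
  have hcard : ∀ X : Submodule (ZMod 2) (Fin 7 → ZMod 2),
      (S X).card = 2 ^ (finrank (ZMod 2) X) - 1 := by
    intro X
    have h0 : (0 : Fin 7 → ZMod 2) ∈ Finset.univ.filter (fun v => v ∈ X) := by
      simp [X.zero_mem]
    have h1 : (Finset.univ.filter (fun v => v ∈ X)).card = Fintype.card X := by
      rw [Fintype.card_subtype]
    have h2 : Fintype.card X = 2 ^ (finrank (ZMod 2) X) := by
      have := card_eq_pow_finrank (K := ZMod 2) (V := X)
      simpa [ZMod.card] using this
    rw [hS]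
    simp only
    rw [Finset.card_erase_of_mem h0, h1, h2]
  -- disjointness
  have hdisjS : (C : Set (Submodule (ZMod 2) (Fin 7 → ZMod 2))).PairwiseDisjoint S := by
    intro X hX Y hY hXY
    refine Finset.disjoint_left.2 ?_
    intro v hvX hvY
    have hv0 : v ≠ 0 := Finset.ne_of_mem_erase hvX
    have hvX' : v ∈ X := by
      have := Finset.mem_of_mem_erase hvX; simpa using this
    have hvY' : v ∈ Y := by
      have := Finset.mem_of_mem_erase hvY; simpa using this
    have : v ∈ X ⊓ Y := ⟨hvX', hvY'⟩
    rw [hdisj X hX Y hY hXY] at this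
    exact hv0 (by simpa using this)
  -- total count bound
  have hsum : ∑ X ∈ C, (S X).card ≤ 127 := by
    rw [← Finset.card_biUnion hdisjS]
    have hsub : C.biUnion S ⊆ Finset.univ.erase 0 := by
      intro v hv
      rcases Finset.mem_biUnion.1 hv with ⟨X, _, hvX⟩
      exact Finset.mem_erase.2 ⟨Finset.ne_of_mem_erase hvX, Finset.mem_univ v⟩
    calc (C.biUnion S).card ≤ (Finset.univ.erase (0 : Fin 7 → ZMod 2)).card :=
          Finset.card_le_card hsub
      _ = 127 := by
        rw [Finset.card_erase_of_mem (Finset.mem_univ 0), Finset.card_univ]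
        simp [Fintype.card_fun, ZMod.card]
  -- split sum by dimension
  have hsplit : 3 * L.card + 7 * P.card ≤ 127 := by
    have h1 : ∑ X ∈ L, (S X).card = 3 * L.card := by
      rw [Finset.sum_congr rfl (fun X hX => ?_), Finset.sum_const, smul_eq_mul, mul_comm]
      have hd : finrank (ZMod 2) ↥X = 2 := (Finset.mem_filter.1 hX).2
      rw [hcard X, hd]; rfl
    have h2 : ∑ X ∈ P, (S X).card = 7 * P.card := by
      rw [Finset.sum_congr rfl (fun X hX => ?_), Finset.sum_const, smul_eq_mul, mul_comm]
      have hd : finrank (ZMod 2) ↥X = 3 := (Finset.mem_filter.1 hX).2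
      rw [hcard X, hd]; rfl
    have hC : ∑ X ∈ L, (S X).card + ∑ X ∈ P, (S X).card = ∑ X ∈ C, (S X).card := by
      rw [hL, hP]
      rw [← Finset.sum_filter_add_sum_filter_not C
        (fun X => finrank (ZMod 2) ↥X = 2) (fun X => (S X).card)]
      congr 1
      apply Finset.sum_congr _ (fun _ _ => rfl)
      apply Finset.filter_congr
      intro X hX
      rcases hdim X hX with h | h <;> simp [h]
    omega
  push_cast
  omega
end

section
/- Let r ≥ 1 and let P be a q^r-divisible multiset of points of F_q^v of cardinality [r+1 choose 1]_q = (q^{r+1}−1)/(q−1). Then P is (with multiplicity 1) exactly the set of points of some (r+1)-dimensional subspace. -/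
open Module Finset
open scoped Classical

/-! Let `U` be the span of `P`, `k = dim U` and `s = [r]_q`, so that `|P| = s + q^r`. A hyperplane
not containing `U` misses a point of `P`, so `|P| - |P ∩ H|` is a positive multiple of `q^r` below
`2q^r`, i.e. `|P ∩ H| = s`. Counting pairs `(Q, φ)` of a point `Q` of `P` and a functional `φ` with
`Q ≤ ker φ` and `U ≰ ker φ` gives `(q^v - q^(v-k)) s = |P| (q^(v-1) - q^(v-k))`, which forces
`k = r + 1`; counting only functionals that also vanish on a fixed point `Q₀ ≤ U` then shows that
`Q₀` has multiplicity `1`. -/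

lemma Finset.sum_card_multiset_filter {α β : Type*} (S : Finset α) (P : Multiset β)
    (p : β → α → Prop) :
    ∑ a ∈ S, Multiset.card (P.filter (p · a)) = (P.map fun b => #{a ∈ S | p b a}).sum := by
  induction P using Multiset.induction with
  | empty => simp
  | cons b P ih =>
    simp only [Multiset.filter_cons, Multiset.card_add, sum_add_distrib, ih, Multiset.map_cons,
      Multiset.sum_cons, card_filter]
    congr 1
    exact sum_congr rfl fun a _ => by split_ifs <;> rfl

lemma Multiset.sum_map_eq_count_mul_add {α M : Type*} [DecidableEq α] [AddCommMonoid M]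
    (P : Multiset α) (a : α) {f : α → M} {y : M} (hy : ∀ b ∈ P, b ≠ a → f b = y) :
    (P.map f).sum = P.count a • f a + (P.filter (· ≠ a)).card • y := by
  conv_lhs => rw [← P.filter_add_not (· = a)]
  rw [Multiset.map_add, Multiset.sum_add, Multiset.filter_eq', Multiset.map_replicate,
    Multiset.sum_replicate, Multiset.map_congr rfl fun b hb => hy b (Multiset.mem_of_mem_filter hb)
      (Multiset.mem_filter.mp hb).2, Multiset.map_const', Multiset.sum_replicate]

lemma Multiset.count_add_card_filter_ne {α : Type*} [DecidableEq α] (P : Multiset α) (a : α) :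
    P.count a + (P.filter (· ≠ a)).card = Multiset.card P := by
  conv_rhs => rw [← P.filter_add_not (· = a)]
  rw [Multiset.card_add, Multiset.filter_eq', Multiset.card_replicate]

lemma Multiset.card_filter_le_eq_of_dvd_sub {α : Type*} [SemilatticeSup α] [OrderBot α]
    {P : Multiset α} {H : α} {s t : ℕ} (hP : Multiset.card P = s + t) (hst : s < t)
    (hdvd : t ∣ Multiset.card P - Multiset.card (P.filter (· ≤ H))) (hH : ¬ P.sup ≤ H) :
    Multiset.card (P.filter (· ≤ H)) = s := by
  have hlt : Multiset.card (P.filter (· ≤ H)) < Multiset.card P := by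
    refine lt_of_le_of_ne (Multiset.card_le_card (Multiset.filter_le _ _)) fun h => hH ?_
    exact Multiset.sup_le.mpr <| Multiset.filter_eq_self.mp <|
      Multiset.eq_of_le_of_card_le (Multiset.filter_le _ _) h.ge
  have := Nat.eq_of_dvd_of_lt_two_mul (by omega) hdvd (by omega)
  omega

-- The equations of the two double counts, with `t = q^r` and `s = 1 + q + ⋯ + q^(r-1)`.
lemma eq_mul_of_sum_eq {q s t a b : ℕ} (hs : s * q + 1 = t + s)
    (h : (s + t) * b + a * s = q * b * s + a * (s + t)) : b = a * t := by
  zify at hs h ⊢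
  linear_combination h + (b : ℤ) * hs

lemma eq_one_of_sum_eq {q s t a b c m n : ℕ} (hq : 2 ≤ q) (hc : c ≠ 0)
    (hs : s * q + 1 = t + s) (hb : b = a * t) (hbc : b = q * c) (hm : m + n = s + t)
    (h : m * b + n * c + a * s = b * s + a * (s + t)) : m = 1 := by
  zify at hs hb hbc hm h hq ⊢
  have key : ((m : ℤ) - 1) * (((q : ℤ) - 1) * c) = 0 := by
    linear_combination h - hb - ((m : ℤ) - s - 1) * hbc - (c : ℤ) * hm + (c : ℤ) * hs
  have hqc : ((q : ℤ) - 1) * c ≠ 0 := mul_ne_zero (by omega) (by exact_mod_cast hc)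
  linarith [(mul_eq_zero.mp key).resolve_right hqc]

section Annihilating

variable {K V : Type*} [Field K] [AddCommGroup V] [Module K V]

lemma finrank_sup_eq_two [FiniteDimensional K V] {Q₁ Q₂ : Submodule K V}
    (h₁ : finrank K Q₁ = 1) (h₂ : finrank K Q₂ = 1) (hne : Q₁ ≠ Q₂) :
    finrank K ↥(Q₁ ⊔ Q₂) = 2 := by
  have hlt : Q₁ ⊓ Q₂ < Q₁ := inf_le_left.lt_of_ne fun h =>
    hne <| Submodule.eq_of_le_of_finrank_eq (h ▸ inf_le_right) (h₁.trans h₂.symm)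
  have := Submodule.finrank_lt_finrank_of_lt hlt
  have := Submodule.finrank_sup_add_finrank_inf_eq Q₁ Q₂
  omega

variable [Fintype (Dual K V)]

variable (K) in
noncomputable def annihilating (W : Submodule K V) : Finset (Dual K V) := {φ | W ≤ LinearMap.ker φ}

lemma mem_annihilating {W : Submodule K V} {φ : Dual K V} :
    φ ∈ annihilating K W ↔ W ≤ LinearMap.ker φ := by
  simp [annihilating]

lemma card_annihilating [Fintype K] [FiniteDimensional K V] (W : Submodule K V) :
    #(annihilating K W) = Fintype.card K ^ (finrank K V - finrank K W) := by
  have hcard : #(annihilating K W) = Fintype.card W.dualAnnihilator := by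
    rw [Fintype.card_subtype]
    congr 1
    ext φ
    simp [mem_annihilating, Submodule.mem_dualAnnihilator, SetLike.le_def]
  rw [hcard, card_eq_pow_finrank (K := K) (V := W.dualAnnihilator),
    ← Subspace.finrank_add_finrank_dualAnnihilator_eq W, Nat.add_sub_cancel_left]

/-- Counts the pairs `(Q, φ)` with `Q ∈ P` and `T ⊔ Q ≤ ker φ` in two ways: a functional vanishing
on `T` has `|P|` points of `P` in its kernel if it vanishes on `U`, and `s` otherwise. -/
lemma sum_card_annihilating_sup_add (P : Multiset (Submodule K V)) {T U : Submodule K V}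
    (hTU : T ≤ U) (hPU : ∀ Q ∈ P, Q ≤ U) {s : ℕ}
    (hcount : ∀ φ : Dual K V, ¬ U ≤ LinearMap.ker φ →
      Multiset.card (P.filter (· ≤ LinearMap.ker φ)) = s) :
    (P.map fun Q => #(annihilating K (T ⊔ Q))).sum + #(annihilating K U) * s
      = #(annihilating K T) * s + #(annihilating K U) * Multiset.card P := by
  have hfubini : ∑ φ ∈ annihilating K T, Multiset.card (P.filter (· ≤ LinearMap.ker φ))
      = (P.map fun Q => #(annihilating K (T ⊔ Q))).sum := by
    rw [sum_card_multiset_filter]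
    congr 1
    refine Multiset.map_congr rfl fun Q _ => congrArg card ?_
    ext φ
    simp [mem_annihilating]
  have hsplit : {φ ∈ annihilating K T | U ≤ LinearMap.ker φ} = annihilating K U := by
    ext φ
    simp only [mem_filter, mem_annihilating]
    exact ⟨And.right, fun h => ⟨hTU.trans h, h⟩⟩
  rw [← hfubini, ← sum_filter_add_sum_filter_not _ (fun φ => U ≤ LinearMap.ker φ), hsplit,
    sum_congr rfl fun φ hφ => congrArg Multiset.card <| Multiset.filter_eq_self.mpr
      fun Q hQ => (hPU Q hQ).trans (mem_annihilating.mp hφ),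
    sum_congr rfl fun φ hφ => hcount φ (mem_filter.mp hφ).2, sum_const, sum_const, smul_eq_mul,
    smul_eq_mul, ← card_filter_add_card_filter_not (s := annihilating K T)
      (fun φ => U ≤ LinearMap.ker φ), hsplit]
  ring

end Annihilating

section Points

variable {K V : Type*} [Field K] [Fintype K] [AddCommGroup V] [Module K V]
  [FiniteDimensional K V] [Fintype (Dual K V)]

lemma finrank_sup_eq_of_card_filter_le_ker {P : Multiset (Submodule K V)} {r s : ℕ}
    (hpts : ∀ Q ∈ P, finrank K Q = 1) (hs : s * Fintype.card K + 1 = Fintype.card K ^ r + s)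
    (hn : Multiset.card P = s + Fintype.card K ^ r)
    (hconst : ∀ φ : Dual K V, ¬ P.sup ≤ LinearMap.ker φ →
      Multiset.card (P.filter (· ≤ LinearMap.ker φ)) = s) :
    finrank K P.sup = r + 1 := by
  set q := Fintype.card K
  set d := finrank K V
  set k := finrank K P.sup
  have hPU : ∀ Q ∈ P, Q ≤ P.sup := fun Q => Multiset.le_sup
  obtain ⟨Q, hQ⟩ := Multiset.card_pos_iff_exists_mem.mp (by rw [hn]; positivity)
  have hk : 1 ≤ k := hpts Q hQ ▸ Submodule.finrank_mono (hPU Q hQ)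
  have hkd : k ≤ d := Submodule.finrank_le _
  have h := sum_card_annihilating_sup_add P bot_le hPU hconst
  rw [Multiset.map_congr rfl fun Q hQ => by rw [bot_sup_eq, card_annihilating, hpts Q hQ],
    Multiset.map_const', Multiset.sum_replicate, smul_eq_mul, card_annihilating,
    card_annihilating, finrank_bot, Nat.sub_zero, hn] at h
  have hb := eq_mul_of_sum_eq hs (a := q ^ (d - k)) (b := q ^ (d - 1))
    (by rwa [← pow_succ', Nat.sub_add_cancel (hk.trans hkd)])
  rw [← pow_add] at hb
  have := Nat.pow_right_injective Fintype.one_lt_card hb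
  omega

lemma count_eq_one_of_card_filter_le_ker {P : Multiset (Submodule K V)} {r s : ℕ} (hr : 1 ≤ r)
    (hpts : ∀ Q ∈ P, finrank K Q = 1) (hs : s * Fintype.card K + 1 = Fintype.card K ^ r + s)
    (hn : Multiset.card P = s + Fintype.card K ^ r)
    (hconst : ∀ φ : Dual K V, ¬ P.sup ≤ LinearMap.ker φ →
      Multiset.card (P.filter (· ≤ LinearMap.ker φ)) = s)
    {Q₀ : Submodule K V} (hQ₀ : finrank K Q₀ = 1) (hQ₀U : Q₀ ≤ P.sup) :
    P.count Q₀ = 1 := by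
  set q := Fintype.card K
  set d := finrank K V
  have hk := finrank_sup_eq_of_card_filter_le_ker hpts hs hn hconst
  have hkd : r + 1 ≤ d := hk ▸ Submodule.finrank_le _
  have h := sum_card_annihilating_sup_add P hQ₀U (fun Q => Multiset.le_sup) hconst
  rw [Multiset.sum_map_eq_count_mul_add P Q₀ (y := q ^ (d - 2)) fun Q hQ hne => by
      rw [card_annihilating, finrank_sup_eq_two hQ₀ (hpts Q hQ) hne.symm],
    sup_idem, card_annihilating, card_annihilating, hQ₀, hk, smul_eq_mul,
    smul_eq_mul, hn] at h
  refine eq_one_of_sum_eq Fintype.one_lt_card (by positivity) hs ?_ ?_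
    ((P.count_add_card_filter_ne Q₀).trans hn) h
  · rw [← pow_add]; congr 1; omega
  · rw [← pow_succ']; congr 1; omega

end Points

/-- A `q^r`-divisible multiset of points of `F_q^v` of cardinality `(q^{r+1}-1)/(q-1)` is
exactly (with multiplicity 1) the set of points of an `(r+1)`-subspace. -/
theorem stmt_13 (K : Type*) [Field K] [Fintype K] (v r : ℕ) (hr : 1 ≤ r)
    (P : Multiset (Submodule K (Fin v → K)))
    (hpts : ∀ Q ∈ P, finrank K ↥Q = 1)
    (hdiv : ∀ H : Submodule K (Fin v → K), finrank K ↥H = v - 1 →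
      (Fintype.card K) ^ r ∣
        Multiset.card P - Multiset.card (P.filter (fun Q => Q ≤ H)))
    (hcard : Multiset.card P = (Fintype.card K ^ (r + 1) - 1) / (Fintype.card K - 1)) :
    ∃ U : Submodule K (Fin v → K), finrank K ↥U = r + 1 ∧
      ∀ Q : Submodule K (Fin v → K), finrank K ↥Q = 1 →
        P.count Q = if Q ≤ U then 1 else 0 := by
  set q := Fintype.card K
  have : Fintype (Dual K (Fin v → K)) := @Fintype.ofFinite _ (Module.finite_of_finite K)
  set s := ∑ i ∈ range r, q ^ i
  have hgeom : ∑ i ∈ range (r + 1), q ^ i = s + q ^ r := sum_range_succ _ _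
  have hn : Multiset.card P = s + q ^ r := by
    rw [hcard, ← Nat.geomSum_eq Fintype.one_lt_card, hgeom]
  have hs : s * q + 1 = q ^ r + s := by rw [mul_comm, ← geom_sum_succ, hgeom, add_comm]
  have hsr : s < q ^ r := by nlinarith [Fintype.one_lt_card (α := K)]
  have hconst : ∀ φ : Dual K (Fin v → K), ¬ P.sup ≤ LinearMap.ker φ →
      Multiset.card (P.filter (· ≤ LinearMap.ker φ)) = s := by
    intro φ hφ
    have hφ0 : φ ≠ 0 := by rintro rfl; simp at hφ
    refine Multiset.card_filter_le_eq_of_dvd_sub hn hsr (hdiv _ ?_) hφ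
    have := Module.Dual.finrank_ker_add_one_of_ne_zero hφ0
    rw [finrank_fin_fun] at this
    omega
  refine ⟨P.sup, finrank_sup_eq_of_card_filter_le_ker hpts hs hn hconst, fun Q hQ => ?_⟩
  split_ifs with hQU
  · exact count_eq_one_of_card_filter_le_ker hr hpts hs hn hconst hQ hQU
  · exact Multiset.count_eq_zero.mpr fun h => hQU (Multiset.le_sup h)
end

section
/- If P is a q^r-divisible multiset of points in F_q^v with r ≥ 1 and H is a hyperplane of F_q^v, then the restriction of P to H is a q^{r−1}-divisible multiset of points of H. -/
open Module
open scoped Classical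

section Aux

variable {K : Type*} [Field K] [Fintype K] {v : ℕ}



lemma aux_exists_span (Q : Submodule K (Fin v → K)) (hQ : finrank K ↥Q = 1) :
    ∃ w : Fin v → K, w ≠ 0 ∧ Q = Submodule.span K {w} := by
  have : FiniteDimensional K ↥Q := .of_finrank_eq_succ hQ
  have hnt : Nontrivial ↥Q := by
    rw [← finrank_pos_iff (R := K)]; omega
  obtain ⟨⟨w, hwQ⟩, hw0⟩ := exists_ne (0 : ↥Q)
  have hw0' : w ≠ 0 := by simpa [Subtype.ext_iff] using hw0
  refine ⟨w, hw0', ?_⟩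
  refine (Submodule.eq_of_le_of_finrank_eq ((Submodule.span_singleton_le_iff_mem w Q).mpr hwQ) ?_).symm
  rw [hQ, finrank_span_singleton hw0']

lemma aux_unique_hyp (hv : 2 ≤ v) (H' : Submodule K (Fin v → K)) (hH' : finrank K ↥H' = v - 2)
    (w : Fin v → K) (hw : w ∉ H') :
    ∃! M : Submodule K (Fin v → K), (H' ≤ M ∧ finrank K ↥M = v - 1) ∧ w ∈ M := by
  have hw0 : w ≠ 0 := fun h => hw (h ▸ H'.zero_mem)
  set M := H' ⊔ Submodule.span K {w} with hM
  have hdisj : Disjoint H' (Submodule.span K {w}) :=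
    Submodule.disjoint_span_singleton.mpr (fun h => absurd h hw)
  have hrank : finrank K ↥M = v - 1 := by
    have h1 := Submodule.finrank_sup_add_finrank_inf_eq H' (Submodule.span K {w})
    rw [hdisj.eq_bot, finrank_bot, hH', finrank_span_singleton hw0] at h1
    rw [← hM] at h1
    omega
  refine ⟨M, ⟨⟨le_sup_left, hrank⟩, Submodule.mem_sup_right (Submodule.mem_span_singleton_self w)⟩, ?_⟩
  rintro N ⟨⟨hH'N, hNrank⟩, hwN⟩
  have hMN : M ≤ N := sup_le hH'N ((Submodule.span_singleton_le_iff_mem w N).mpr hwN)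
  exact (Submodule.eq_of_le_of_finrank_eq hMN (by rw [hrank, hNrank])).symm

variable (H' : Submodule K (Fin v → K))

noncomputable def hypSet : Finset (Submodule K (Fin v → K)) :=
  Finset.univ.filter (fun M => H' ≤ M ∧ finrank K ↥M = v - 1)

lemma card_submodule_toFinset (N : Submodule K (Fin v → K)) :
    (N : Set (Fin v → K)).toFinset.card = Fintype.card K ^ finrank K ↥N := by
  rw [Set.toFinset_card]
  simpa using Module.card_fintype (finBasis K ↥N)

lemma card_hypSet (hv : 2 ≤ v) (hH' : finrank K ↥H' = v - 2) :
    (hypSet H').card = Fintype.card K + 1 := by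
  set q := Fintype.card K with hq
  have hq2 : 2 ≤ q := Fintype.one_lt_card
  set t : Submodule K (Fin v → K) → Finset (Fin v → K) := fun M => (M : Set (Fin v → K)).toFinset \ (H' : Set (Fin v → K)).toFinset with ht
  have hdisj : ∀ M₁ ∈ hypSet H', ∀ M₂ ∈ hypSet H', M₁ ≠ M₂ → Disjoint (t M₁) (t M₂) := by
    intro M₁ h1 M₂ h2 hne
    simp only [hypSet, Finset.mem_filter] at h1 h2
    rw [Finset.disjoint_left]
    intro w hw1 hw2
    simp only [ht, Finset.mem_sdiff, Set.mem_toFinset, SetLike.mem_coe] at hw1 hw2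
    obtain ⟨M, _, huniq⟩ := aux_unique_hyp hv H' hH' w hw1.2
    exact hne (((huniq M₁ ⟨h1.2, hw1.1⟩).trans (huniq M₂ ⟨h2.2, hw2.1⟩).symm))
  have hcover : (hypSet H').biUnion t = Finset.univ \ (H' : Set (Fin v → K)).toFinset := by
    ext w
    simp only [Finset.mem_biUnion, Finset.mem_sdiff, Finset.mem_univ, true_and, ht,
      Set.mem_toFinset, SetLike.mem_coe, hypSet, Finset.mem_filter]
    constructor
    · rintro ⟨M, _, _, hwH'⟩; exact hwH'
    · intro hwH'
      obtain ⟨M, ⟨⟨hle, hrk⟩, hwM⟩, _⟩ := aux_unique_hyp hv H' hH' w hwH'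
      exact ⟨M, ⟨hle, hrk⟩, hwM, hwH'⟩
  have hcard := Finset.card_biUnion hdisj
  rw [hcover] at hcard
  have hMc : ∀ M ∈ hypSet H', (t M).card = q ^ (v - 1) - q ^ (v - 2) := by
    intro M hM
    simp only [hypSet, Finset.mem_filter] at hM
    rw [ht]
    have hsub : (H' : Set (Fin v → K)).toFinset ⊆ (M : Set (Fin v → K)).toFinset := by
      intro x hx
      simp only [Set.mem_toFinset, SetLike.mem_coe] at hx ⊢
      exact hM.2.1 hx
    rw [Finset.card_sdiff_of_subset hsub, card_submodule_toFinset, card_submodule_toFinset, hM.2.2, hH']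
  rw [Finset.sum_congr rfl hMc, Finset.sum_const, smul_eq_mul] at hcard
  have hcardV : (Finset.univ \ (H' : Set (Fin v → K)).toFinset).card = q ^ v - q ^ (v - 2) := by
    rw [Finset.card_sdiff_of_subset (Finset.subset_univ _), card_submodule_toFinset, hH',
      Finset.card_univ, Fintype.card_fun, Fintype.card_fin]
  rw [hcardV] at hcard
  -- arithmetic
  obtain ⟨m, rfl⟩ : ∃ m, v = m + 2 := ⟨v - 2, by omega⟩
  have e1 : m + 2 - 1 = m + 1 := by omega
  have e2 : m + 2 - 2 = m := by omega
  rw [e1, e2] at hcard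
  have ha : 1 ≤ q ^ m := Nat.one_le_pow _ _ (by omega)
  have h1 : q ^ (m + 1) - q ^ m = q ^ m * (q - 1) := by
    rw [pow_succ, Nat.mul_sub, mul_one]
  have h3 : q * q - 1 = (q + 1) * (q - 1) := by
    have := Nat.sq_sub_sq q 1
    simpa [pow_two] using this
  have h2 : q ^ (m + 2) - q ^ m = (q + 1) * (q ^ m * (q - 1)) := by
    rw [show (q + 1) * (q ^ m * (q - 1)) = q ^ m * ((q + 1) * (q - 1)) by ring, ← h3,
      Nat.mul_sub, mul_one, show q ^ m * (q * q) = q ^ (m + 2) by ring]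
  rw [h1, h2] at hcard
  have hpos : 0 < q ^ m * (q - 1) := Nat.mul_pos (by positivity) (by omega)
  exact Nat.eq_of_mul_eq_mul_right hpos hcard.symm


lemma card_filter_hypSet (hv : 2 ≤ v) (hH' : finrank K ↥H' = v - 2)
    (Q : Submodule K (Fin v → K)) (hQ : finrank K ↥Q = 1) :
    ((hypSet H').filter (fun M => Q ≤ M)).card
      = if Q ≤ H' then Fintype.card K + 1 else 1 := by
  by_cases h : Q ≤ H'
  · rw [if_pos h, Finset.filter_true_of_mem, card_hypSet H' hv hH']
    intro M hM
    simp only [hypSet, Finset.mem_filter] at hM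
    exact h.trans hM.2.1
  · rw [if_neg h]
    obtain ⟨w, hw0, rfl⟩ := aux_exists_span Q hQ
    have hwH' : w ∉ H' := fun hmem => h ((Submodule.span_singleton_le_iff_mem w H').mpr hmem)
    obtain ⟨M, hM, huniq⟩ := aux_unique_hyp hv H' hH' w hwH'
    rw [Finset.card_eq_one]
    refine ⟨M, ?_⟩
    ext N
    simp only [Finset.mem_filter, hypSet, Finset.mem_univ, true_and, Finset.mem_singleton,
      Submodule.span_singleton_le_iff_mem]
    constructor
    · rintro ⟨⟨h1, h2⟩, h3⟩
      exact huniq N ⟨⟨h1, h2⟩, h3⟩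
    · rintro rfl
      exact ⟨⟨hM.1.1, hM.1.2⟩, hM.2⟩

lemma sum_card_filter (hv : 2 ≤ v) (hH' : finrank K ↥H' = v - 2)
    (P : Multiset (Submodule K (Fin v → K))) (hP : ∀ Q ∈ P, finrank K ↥Q = 1) :
    ∑ M ∈ hypSet H', Multiset.card (P.filter (fun Q => Q ≤ M))
      = Fintype.card K * Multiset.card (P.filter (fun Q => Q ≤ H')) + Multiset.card P := by
  revert hP
  induction P using Multiset.induction_on with
  | empty => intro _; simp
  | cons Q P ih =>
    intro hP
    have hQ : finrank K ↥Q = 1 := hP Q (Multiset.mem_cons_self Q P)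
    have hP' : ∀ R ∈ P, finrank K ↥R = 1 := fun R hR => hP R (Multiset.mem_cons_of_mem hR)
    have hcard : ∀ (N : Submodule K (Fin v → K)),
        Multiset.card ((Q ::ₘ P).filter (fun R => R ≤ N))
          = (if Q ≤ N then 1 else 0) + Multiset.card (P.filter (fun R => R ≤ N)) := by
      intro N
      rw [Multiset.filter_cons, Multiset.card_add]
      congr 1
      by_cases hQN : Q ≤ N <;> simp [hQN]
    simp only [hcard, Multiset.card_cons]
    rw [Finset.sum_add_distrib, ← Finset.card_filter, card_filter_hypSet H' hv hH' Q hQ,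
      ih hP']
    by_cases hQH' : Q ≤ H' <;> simp [hQH'] <;> ring

end Aux

/-- The restriction of a `q^r`-divisible multiset of points to a hyperplane `H` is a
`q^{r-1}`-divisible multiset of points of `H` (hyperplanes of `H` being the
`(v-2)`-subspaces contained in `H`). -/
theorem stmt_14 (K : Type*) [Field K] [Fintype K] (v r : ℕ) (hr : 1 ≤ r)
    (P : Multiset (Submodule K (Fin v → K)))
    (hpts : ∀ Q ∈ P, finrank K ↥Q = 1)
    (hdiv : ∀ H : Submodule K (Fin v → K), finrank K ↥H = v - 1 →
      (Fintype.card K) ^ r ∣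
        Multiset.card P - Multiset.card (P.filter (fun Q => Q ≤ H)))
    (H : Submodule K (Fin v → K)) (hH : finrank K ↥H = v - 1) :
    ∀ H' : Submodule K (Fin v → K), H' ≤ H → finrank K ↥H' = v - 2 →
      (Fintype.card K) ^ (r - 1) ∣
        Multiset.card (P.filter (fun Q => Q ≤ H))
          - Multiset.card (P.filter (fun Q => Q ≤ H')) := by
  intro H' hH'H hH'2
  by_cases hv : 2 ≤ v
  · set q := Fintype.card K with hq
    have hq2 : 2 ≤ q := Fintype.one_lt_card
    set n := Multiset.card P with hn
    set aH := Multiset.card (P.filter (fun Q => Q ≤ H)) with haH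
    set aH' := Multiset.card (P.filter (fun Q => Q ≤ H')) with haH'
    have hsum := sum_card_filter H' hv hH'2 P hpts
    have hHT : H ∈ hypSet H' := by
      simp only [hypSet, Finset.mem_filter, Finset.mem_univ, true_and]
      exact ⟨hH'H, hH⟩
    have hdvd : ∀ M ∈ hypSet H',
        (q : ℤ) ^ r ∣ (n : ℤ) - Multiset.card (P.filter (fun Q => Q ≤ M)) := by
      intro M hM
      simp only [hypSet, Finset.mem_filter] at hM
      have h1 := hdiv M hM.2.2
      have hle : Multiset.card (P.filter (fun Q => Q ≤ M)) ≤ n :=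
        Multiset.card_le_card (Multiset.filter_le _ _)
      have h2 := Int.natCast_dvd_natCast.mpr h1
      rwa [Nat.cast_sub hle, Nat.cast_pow] at h2
    have hsumdvd : (q : ℤ) ^ r ∣
        ∑ M ∈ hypSet H', ((n : ℤ) - Multiset.card (P.filter (fun Q => Q ≤ M))) :=
      Finset.dvd_sum hdvd
    have hsumeq : ∑ M ∈ hypSet H', ((n : ℤ) - Multiset.card (P.filter (fun Q => Q ≤ M)))
        = (q : ℤ) * ((n : ℤ) - (aH' : ℤ)) := by
      rw [Finset.sum_sub_distrib, Finset.sum_const, card_hypSet H' hv hH'2]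
      have hcast : (∑ M ∈ hypSet H',
          (Multiset.card (P.filter (fun Q => Q ≤ M)) : ℤ)) = (q : ℤ) * aH' + n := by
        exact_mod_cast congrArg (Nat.cast : ℕ → ℤ) hsum
      rw [hcast]
      ring
    rw [hsumeq] at hsumdvd
    have hdvdH' : (q : ℤ) ^ (r - 1) ∣ (n : ℤ) - aH' := by
      have hqr : (q : ℤ) ^ r = q * q ^ (r - 1) := by
        rw [← pow_succ']
        congr 1
        omega
      rw [hqr] at hsumdvd
      exact (mul_dvd_mul_iff_left (show (q : ℤ) ≠ 0 by exact_mod_cast (show q ≠ 0 by omega))).mp hsumdvd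
    have hdvdH : (q : ℤ) ^ (r - 1) ∣ (n : ℤ) - aH :=
      dvd_trans (pow_dvd_pow _ (by omega)) (hdvd H hHT)
    have hfinal : (q : ℤ) ^ (r - 1) ∣ (aH : ℤ) - aH' := by
      have h := dvd_sub hdvdH' hdvdH
      have e : (n : ℤ) - aH' - ((n : ℤ) - aH) = (aH : ℤ) - aH' := by ring
      rwa [e] at h
    have hle : aH' ≤ aH :=
      Multiset.card_le_card (Multiset.monotone_filter_right P (fun Q h => h.trans hH'H))
    have hcast2 : ((q ^ (r - 1) : ℕ) : ℤ) ∣ ((aH - aH' : ℕ) : ℤ) := by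
      rw [Nat.cast_sub hle, Nat.cast_pow]
      exact hfinal
    exact_mod_cast hcast2
  · have hH0 : finrank K ↥H = 0 := by omega
    have hfil : P.filter (fun Q => Q ≤ H) = 0 := by
      rw [Multiset.filter_eq_nil]
      intro Q hQ hQH
      have hm := Submodule.finrank_mono hQH
      rw [hpts Q hQ, hH0] at hm
      omega
    have hfil' : P.filter (fun Q => Q ≤ H') = 0 := by
      rw [Multiset.filter_eq_nil]
      intro Q hQ hQH'
      have hm := Submodule.finrank_mono (hQH'.trans hH'H)
      rw [hpts Q hQ, hH0] at hm
      omega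
    rw [hfil, hfil']
    simp
end

section
/- Let C be a set of 255 solids (4-subspaces) of F_2^8 with pairwise intersections of dimension at most 1 (minimum subspace distance 6), all intersecting a fixed solid S trivially. Then there exists a solid U of F_2^8 intersecting S trivially such that dim(U∩C') ≤ 1 for all C' ∈ C; i.e., C extends to a code of 256 solids disjoint from S. -/
open Module Finset
open scoped Classical

namespace Stmt16Aux

abbrev Vv := Fin 8 → ZMod 2

noncomputable def pts (W : Submodule (ZMod 2) Vv) : Finset Vv := univ.filter (· ∈ W)

lemma pts_card (W : Submodule (ZMod 2) Vv) :
    (pts W).card = 2 ^ finrank (ZMod 2) W := by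
  rw [pts, ← Fintype.card_subtype]
  have := card_eq_pow_finrank (K := ZMod 2) (V := W)
  simpa using this

lemma mem_pts {W : Submodule (ZMod 2) Vv} {v : Vv} : v ∈ pts W ↔ v ∈ W := by simp [pts]

lemma vv_add_self (v : Vv) : v + v = 0 := by
  ext i; show v i + v i = 0; generalize v i = c; revert c; decide

noncomputable def mm (C : Finset (Submodule (ZMod 2) Vv)) (p : Vv) : ℕ :=
  (C.filter (fun X => p ∈ X)).card

noncomputable def PP (S : Submodule (ZMod 2) Vv) : Finset Vv := univ.filter (· ∉ S)

noncomputable def Fr (S : Submodule (ZMod 2) Vv) (C : Finset (Submodule (ZMod 2) Vv))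
    (p : Vv) : Finset Vv :=
  (PP S).filter (fun q => q ≠ p ∧ p + q ∉ S ∧ ∀ X ∈ C, ¬(p ∈ X ∧ q ∈ X))

section Main
variable {S : Submodule (ZMod 2) Vv} {C : Finset (Submodule (ZMod 2) Vv)}

lemma hmeet (hdist : ∀ X ∈ C, ∀ Y ∈ C, X ≠ Y → finrank (ZMod 2) ↥(X ⊓ Y) ≤ 1) :
    ∀ X ∈ C, ∀ Y ∈ C, X ≠ Y → ∀ q, q ∈ X → q ∈ Y → q ≠ 0 →
    ∀ r, r ∈ X → r ∈ Y → r ≠ 0 → q = r := by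
  intro X hX Y hY hne q hqX hqY hq r hrX hrY hr
  by_contra hqr
  have h2 : (pts (X ⊓ Y)).card ≤ 2 := by
    rw [pts_card]
    calc 2 ^ finrank (ZMod 2) ↥(X ⊓ Y) ≤ 2 ^ 1 :=
      Nat.pow_le_pow_right (by norm_num) (hdist X hX Y hY hne)
    _ = 2 := rfl
  have hsub : ({0, q, r} : Finset Vv) ⊆ pts (X ⊓ Y) := by
    intro x hx
    simp only [mem_insert, mem_singleton] at hx
    rcases hx with rfl | rfl | rfl <;> rw [mem_pts, Submodule.mem_inf] <;>
      exact ⟨by first | exact Submodule.zero_mem _ | assumption,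
             by first | exact Submodule.zero_mem _ | assumption⟩
  have : ({0, q, r} : Finset Vv).card = 3 := by
    rw [card_insert_of_notMem (by simp [Ne.symm hq, Ne.symm hr]),
      card_insert_of_notMem (by simp [hqr]), card_singleton]
  have := card_le_card hsub
  omega

variable (hS : finrank (ZMod 2) ↥S = 4)
    (hdim : ∀ X ∈ C, finrank (ZMod 2) ↥X = 4)
    (hdist : ∀ X ∈ C, ∀ Y ∈ C, X ≠ Y → finrank (ZMod 2) ↥(X ⊓ Y) ≤ 1)
    (hdisjS : ∀ X ∈ C, X ⊓ S = ⊥)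

include hS hdim hdist hdisjS in
lemma key_count : ∀ p ∈ PP S, 14 * mm C p + (Fr S C p).card = 224 := by
  intro p hp
  rw [PP, mem_filter] at hp
  have hpS : p ∉ S := hp.2
  have hp0 : p ≠ 0 := fun h => hpS (h ▸ S.zero_mem)
  -- the solids through p
  set Cp := C.filter (fun X => p ∈ X) with hCp
  set A := Cp.biUnion (fun X => pts X \ {0, p}) with hA
  have hXdisjS : ∀ X ∈ C, ∀ v, v ∈ X → v ∈ S → v = 0 := by
    intro X hX v hvX hvS
    have : v ∈ X ⊓ S := ⟨hvX, hvS⟩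
    rw [hdisjS X hX] at this
    simpa using this
  have hAcard : A.card = 14 * mm C p := by
    rw [hA, card_biUnion]
    · rw [Finset.sum_congr rfl (fun X hX => ?_), Finset.sum_const, smul_eq_mul, mm, mul_comm]
      have hXC : X ∈ C := (mem_filter.mp hX).1
      have hpX : p ∈ X := (mem_filter.mp hX).2
      have hsub : ({0, p} : Finset Vv) ⊆ pts X := by
        intro x hx
        simp only [mem_insert, mem_singleton] at hx
        rcases hx with rfl | rfl
        · exact mem_pts.mpr (X.zero_mem)
        · exact mem_pts.mpr hpX
      rw [card_sdiff_of_subset hsub, pts_card, hdim X hXC]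
      simp [card_insert_of_notMem, hp0.symm]
    · intro X hX Y hY hne
      intro s hsX hsY q hq
      exfalso
      have h1 := hsX hq
      have h2 := hsY hq
      rw [mem_sdiff, mem_pts] at h1 h2
      have hq0 : q ≠ 0 := by simp at h1; tauto
      have hqp : q ≠ p := by simp at h1; tauto
      have := hmeet hdist X (mem_filter.mp hX).1 Y (mem_filter.mp hY).1 hne
        q h1.1 h2.1 hq0 p (mem_filter.mp hX).2 (mem_filter.mp hY).2 hp0
      exact hqp this
  -- the chain of complements
  set B1 := pts S \ {0} with hB1
  set B2 := B1.image (· + p) with hB2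
  have hB1card : B1.card = 15 := by
    rw [hB1, card_sdiff_of_subset (by simp [mem_pts]), pts_card, hS]; simp
  have hB2card : B2.card = 15 := by
    rw [hB2, card_image_of_injective _ (add_left_injective p), hB1card]
  set c1 := (univ : Finset Vv) \ {0, p} with hc1
  have hc1card : c1.card = 254 := by
    rw [hc1, card_sdiff_of_subset (subset_univ _), card_univ]
    simp [card_insert_of_notMem, hp0.symm]
  have hB1c1 : B1 ⊆ c1 := by
    intro x hx
    rw [hB1, mem_sdiff, mem_pts] at hx
    rw [hc1, mem_sdiff]
    refine ⟨mem_univ _, ?_⟩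
    simp only [mem_insert, mem_singleton, not_or]
    exact ⟨by simpa using hx.2, fun h => hpS (h ▸ hx.1)⟩
  set c2 := c1 \ B1 with hc2
  have hc2card : c2.card = 239 := by
    rw [hc2, card_sdiff_of_subset hB1c1, hc1card, hB1card]
  have hB2c2 : B2 ⊆ c2 := by
    intro x hx
    rw [hB2, mem_image] at hx
    obtain ⟨s, hs, rfl⟩ := hx
    rw [hB1, mem_sdiff, mem_pts] at hs
    have hs0 : s ≠ 0 := by simpa using hs.2
    have h1 : s + p ≠ 0 := by
      intro h
      have : s = p := by
        have := congrArg (· + p) h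
        simpa [add_assoc, vv_add_self] using this
      exact hpS (this ▸ hs.1)
    have h2 : s + p ≠ p := by
      intro h
      exact hs0 (by simpa using congrArg (· + p) h)
    have h3 : s + p ∉ S := fun h => hpS (by
      have : (s + p) + s ∈ S := S.add_mem h hs.1
      rwa [add_comm s p, add_assoc, vv_add_self, add_zero] at this)
    rw [hc2, mem_sdiff, hc1, mem_sdiff]
    refine ⟨⟨mem_univ _, by simp [h1, h2]⟩, ?_⟩
    rw [hB1, mem_sdiff, mem_pts]
    simp [h3]
  set c3 := c2 \ B2 with hc3
  have hc3card : c3.card = 224 := by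
    rw [hc3, card_sdiff_of_subset hB2c2, hc2card, hB2card]
  have hAc3 : A ⊆ c3 := by
    intro q hq
    rw [hA, mem_biUnion] at hq
    obtain ⟨X, hX, hqX⟩ := hq
    have hXC : X ∈ C := (mem_filter.mp hX).1
    have hpX : p ∈ X := (mem_filter.mp hX).2
    rw [mem_sdiff, mem_pts] at hqX
    have hq0 : q ≠ 0 := by simp at hqX; tauto
    have hqp : q ≠ p := by simp at hqX; tauto
    have hqS : q ∉ S := fun h => hq0 (hXdisjS X hXC q hqX.1 h)
    have hqpS : q + p ∉ S := by
      intro h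
      have hqpX : q + p ∈ X := X.add_mem hqX.1 hpX
      have := hXdisjS X hXC _ hqpX h
      exact hqp (by
        have := congrArg (· + p) this
        simpa [add_assoc, vv_add_self] using this)
    rw [hc3, mem_sdiff, hc2, mem_sdiff, hc1, mem_sdiff]
    refine ⟨⟨⟨mem_univ _, by simp [hq0, hqp]⟩, ?_⟩, ?_⟩
    · rw [hB1, mem_sdiff, mem_pts]; simp [hqS]
    · rw [hB2, mem_image]
      rintro ⟨s, hs, rfl⟩
      rw [hB1, mem_sdiff, mem_pts] at hs
      exact (hqpS (by rw [add_assoc, vv_add_self, add_zero]; exact hs.1)).elim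
  have hFrEq : Fr S C p = c3 \ A := by
    ext q
    rw [Fr, mem_filter, PP, mem_filter, mem_sdiff]
    constructor
    · rintro ⟨⟨_, hqS⟩, hqp, hpqS, hXs⟩
      have hq0 : q ≠ 0 := fun h => hqS (h ▸ S.zero_mem)
      refine ⟨?_, ?_⟩
      · rw [hc3, mem_sdiff, hc2, mem_sdiff, hc1, mem_sdiff]
        refine ⟨⟨⟨mem_univ _, by simp [hq0, hqp]⟩, ?_⟩, ?_⟩
        · rw [hB1, mem_sdiff, mem_pts]; simp [hqS]
        · rw [hB2, mem_image]
          rintro ⟨s, hs, rfl⟩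
          rw [hB1, mem_sdiff, mem_pts] at hs
          exact hpqS (by rw [add_comm p (s + p), add_assoc, vv_add_self, add_zero]; exact hs.1)
      · rw [hA, mem_biUnion]
        rintro ⟨X, hX, hqX⟩
        exact hXs X (mem_filter.mp hX).1 ⟨(mem_filter.mp hX).2, mem_pts.mp (mem_sdiff.mp hqX).1⟩
    · rintro ⟨hqc3, hqA⟩
      rw [hc3, mem_sdiff, hc2, mem_sdiff, hc1, mem_sdiff] at hqc3
      obtain ⟨⟨⟨_, hq0p⟩, hqB1⟩, hqB2⟩ := hqc3
      simp only [mem_insert, mem_singleton, not_or] at hq0p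
      obtain ⟨hq0, hqp⟩ := hq0p
      rw [hB1, mem_sdiff, mem_pts] at hqB1
      have hqS : q ∉ S := by
        intro h; exact hqB1 ⟨h, by simp [hq0]⟩
      have hpqS : p + q ∉ S := by
        intro h
        apply hqB2
        rw [hB2, mem_image]
        refine ⟨p + q, ?_, by rw [add_comm p q, add_assoc, vv_add_self, add_zero]⟩
        rw [hB1, mem_sdiff, mem_pts]
        have hpq0 : p + q ≠ 0 := by
          intro hh
          apply hqp
          calc q = p + p + q := by rw [vv_add_self, zero_add]
          _ = p := by rw [add_assoc, hh, add_zero]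
        simp [h, hpq0]
      refine ⟨⟨mem_univ _, hqS⟩, hqp, hpqS, ?_⟩
      intro X hX ⟨hpX, hqX⟩
      apply hqA
      rw [hA, mem_biUnion]
      exact ⟨X, mem_filter.mpr ⟨hX, hpX⟩, mem_sdiff.mpr ⟨mem_pts.mpr hqX, by simp [hq0, hqp]⟩⟩
  have := card_sdiff_add_card_eq_card hAc3
  rw [← hFrEq] at this
  omega

end Main

section Main2
variable {S : Submodule (ZMod 2) Vv} {C : Finset (Submodule (ZMod 2) Vv)}

lemma card_PP (hS : finrank (ZMod 2) ↥S = 4) : (PP S).card = 240 := by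
  have : PP S = univ \ pts S := by
    ext q; simp [PP, pts]
  rw [this, card_sdiff_of_subset (subset_univ _), pts_card, hS, card_univ]
  simp

lemma sum_mm (hS : finrank (ZMod 2) ↥S = 4) (hcard : C.card = 255)
    (hdim : ∀ X ∈ C, finrank (ZMod 2) ↥X = 4)
    (hdisjS : ∀ X ∈ C, X ⊓ S = ⊥) :
    ∑ p ∈ PP S, mm C p = 3825 := by
  have h1 : ∀ p, mm C p = ∑ X ∈ C, if p ∈ X then 1 else 0 := by
    intro p; rw [mm, card_filter]
  calc ∑ p ∈ PP S, mm C p = ∑ p ∈ PP S, ∑ X ∈ C, if p ∈ X then 1 else 0 := by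
        exact Finset.sum_congr rfl (fun p _ => h1 p)
    _ = ∑ X ∈ C, ∑ p ∈ PP S, if p ∈ X then 1 else 0 := Finset.sum_comm
    _ = ∑ X ∈ C, ((PP S).filter (· ∈ X)).card := by
        exact Finset.sum_congr rfl (fun X _ => (card_filter _ _).symm)
    _ = ∑ X ∈ C, 15 := by
        refine Finset.sum_congr rfl (fun X hX => ?_)
        have hflt : (PP S).filter (· ∈ X) = pts X \ {0} := by
          ext q
          simp only [PP, mem_filter, mem_univ, true_and, mem_sdiff, mem_pts, mem_singleton]
          constructor
          · rintro ⟨hqS, hqX⟩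
            exact ⟨hqX, fun h => hqS (h ▸ S.zero_mem)⟩
          · rintro ⟨hqX, hq0⟩
            refine ⟨fun hqS => hq0 ?_, hqX⟩
            have : q ∈ X ⊓ S := ⟨hqX, hqS⟩
            rw [hdisjS X hX] at this
            simpa using this
        rw [hflt, card_sdiff_of_subset (by simp [mem_pts]), pts_card, hdim X hX]; rfl
    _ = 3825 := by rw [Finset.sum_const, hcard]; norm_num

lemma Fr_symm {p q : Vv} (hp : p ∈ PP S) (hq : q ∈ Fr S C p) : p ∈ Fr S C q := by
  rw [Fr, mem_filter] at hq ⊢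
  obtain ⟨hqPP, hqp, hpqS, hX⟩ := hq
  exact ⟨hp, fun h => hqp h.symm, by rwa [add_comm],
    fun X hXC h => hX X hXC ⟨h.2, h.1⟩⟩

lemma Fr_add {p q : Vv} (hp : p ∈ PP S) (hq : q ∈ Fr S C p) : p + q ∈ Fr S C p := by
  rw [Fr, mem_filter] at hq ⊢
  obtain ⟨hqPP, hqp, hpqS, hX⟩ := hq
  rw [PP, mem_filter] at hqPP
  have hqS : q ∉ S := hqPP.2
  have hq0 : q ≠ 0 := fun h => hqS (h ▸ S.zero_mem)
  refine ⟨by rw [PP, mem_filter]; exact ⟨mem_univ _, hpqS⟩, ?_, ?_, ?_⟩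
  · intro h
    apply hq0
    calc q = p + (p + q) := by rw [← add_assoc, vv_add_self, zero_add]
    _ = p + p := by rw [h]
    _ = 0 := vv_add_self p
  · rw [← add_assoc, vv_add_self, zero_add]; exact hqS
  · intro X hXC h
    have hqX : q ∈ X := by
      have := X.add_mem h.1 h.2
      rwa [← add_assoc, vv_add_self, zero_add] at this
    exact hX X hXC ⟨h.1, hqX⟩

theorem final (hS : finrank (ZMod 2) ↥S = 4) (hcard : C.card = 255)
    (hdim : ∀ X ∈ C, finrank (ZMod 2) ↥X = 4)
    (hdist : ∀ X ∈ C, ∀ Y ∈ C, X ≠ Y → finrank (ZMod 2) ↥(X ⊓ Y) ≤ 1)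
    (hdisjS : ∀ X ∈ C, X ⊓ S = ⊥) :
    ∃ U : Submodule (ZMod 2) Vv, finrank (ZMod 2) ↥U = 4 ∧
      U ⊓ S = ⊥ ∧ ∀ X ∈ C, finrank (ZMod 2) ↥(U ⊓ X) ≤ 1 := by
  classical
  set T := (PP S).filter (fun p => mm C p < 16) with hT
  have hTsub : T ⊆ PP S := filter_subset _ _
  have key := key_count hS hdim hdist hdisjS
  have hm16 : ∀ p ∈ PP S, mm C p ≤ 16 := fun p hp => by have := key p hp; omega
  have hFrcard : ∀ p ∈ PP S, (Fr S C p).card = 14 * (16 - mm C p) := by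
    intro p hp; have h1 := key p hp; have h2 := hm16 p hp; omega
  have hsum_n : ∑ p ∈ PP S, (16 - mm C p) = 15 := by
    have h1 := sum_mm hS hcard hdim hdisjS
    have h2 : ∑ p ∈ PP S, ((16 - mm C p) + mm C p) = 3840 := by
      rw [Finset.sum_congr rfl (fun p hp => Nat.sub_add_cancel (hm16 p hp)),
        Finset.sum_const, card_PP hS]
      norm_num
    rw [Finset.sum_add_distrib, h1] at h2
    omega
  have hsum_nT : ∑ p ∈ T, (16 - mm C p) = 15 := by
    rw [← hsum_n, ← Finset.sum_filter_add_sum_filter_not (PP S) (fun p => mm C p < 16)]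
    have : ∑ p ∈ (PP S).filter (fun p => ¬ mm C p < 16), (16 - mm C p) = 0 := by
      apply Finset.sum_eq_zero
      intro p hp
      rw [mem_filter] at hp
      omega
    rw [hT, this, add_zero]
  have hTcard_le : T.card ≤ 15 := by
    have h1 : T.card = ∑ p ∈ T, 1 := by simp
    have h2 : ∑ p ∈ T, 1 ≤ ∑ p ∈ T, (16 - mm C p) := by
      apply Finset.sum_le_sum
      intro p hp
      rw [hT, mem_filter] at hp
      omega
    omega
  have hq_in_T : ∀ p ∈ PP S, ∀ q ∈ Fr S C p, q ∈ T := by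
    intro p hp q hq
    have hqPP : q ∈ PP S := (mem_filter.mp hq).1
    have hpq : p ∈ Fr S C q := Fr_symm hp hq
    have hne : (Fr S C q).card ≠ 0 := Finset.card_ne_zero_of_mem hpq
    have := hFrcard q hqPP
    rw [hT, mem_filter]
    exact ⟨hqPP, by omega⟩
  have hFr_sub : ∀ p ∈ PP S, Fr S C p ⊆ T.erase p := by
    intro p hp q hq
    rw [mem_erase]
    exact ⟨(mem_filter.mp hq).2.1, hq_in_T p hp q hq⟩
  have hsumFr : ∑ p ∈ T, (Fr S C p).card = 210 := by
    have h1 : ∑ p ∈ PP S, (Fr S C p).card = 210 := by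
      rw [Finset.sum_congr rfl hFrcard, ← Finset.mul_sum, hsum_n]
      norm_num
    rw [← h1, ← Finset.sum_filter_add_sum_filter_not (PP S) (fun p => mm C p < 16)]
    have : ∑ p ∈ (PP S).filter (fun p => ¬ mm C p < 16), (Fr S C p).card = 0 := by
      apply Finset.sum_eq_zero
      intro p hp
      rw [mem_filter] at hp
      have h2 := hFrcard p hp.1
      have h3 := hm16 p hp.1
      omega
    rw [hT, this, add_zero]
  have hT15 : T.card = 15 := by
    have hle : ∑ p ∈ T, (Fr S C p).card ≤ ∑ p ∈ T, (T.card - 1) := by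
      apply Finset.sum_le_sum
      intro p hp
      have := card_le_card (hFr_sub p (hTsub hp))
      rwa [card_erase_of_mem hp] at this
    rw [hsumFr, Finset.sum_const, smul_eq_mul] at hle
    by_contra hne
    have hlt : T.card ≤ 14 := by omega
    have : T.card * (T.card - 1) ≤ 14 * 13 := Nat.mul_le_mul hlt (by omega)
    omega
  have hFr_eq : ∀ p ∈ T, Fr S C p = T.erase p := by
    have hub : ∀ x ∈ T, (Fr S C x).card ≤ 14 := by
      intro x hx
      have := card_le_card (hFr_sub x (hTsub hx))
      rwa [card_erase_of_mem hx, hT15] at this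
    have hall : ∀ x ∈ T, (Fr S C x).card = 14 := by
      by_contra hc
      push_neg at hc
      obtain ⟨x, hx, hxne⟩ := hc
      have : ∑ p ∈ T, (Fr S C p).card < ∑ p ∈ T, 14 :=
        Finset.sum_lt_sum (fun i hi => hub i hi) ⟨x, hx, lt_of_le_of_ne (hub x hx) hxne⟩
      rw [hsumFr, Finset.sum_const, hT15, smul_eq_mul] at this
      omega
    intro p hp
    apply Finset.eq_of_subset_of_card_le (hFr_sub p (hTsub hp))
    rw [card_erase_of_mem hp, hT15, hall p hp]
  -- now build U
  have h0T : (0:Vv) ∉ T := by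
    intro h
    have := hTsub h
    rw [PP, mem_filter] at this
    exact this.2 S.zero_mem
  have haddT : ∀ a ∈ T, ∀ b ∈ T, a ≠ b → a + b ∈ T := by
    intro a ha b hb hab
    have hbFr : b ∈ Fr S C a := by
      rw [hFr_eq a ha, mem_erase]
      exact ⟨fun h => hab h.symm, hb⟩
    have := Fr_add (hTsub ha) hbFr
    exact hq_in_T a (hTsub ha) _ this
  have hnoX : ∀ a ∈ T, ∀ b ∈ T, a ≠ b → ∀ X ∈ C, ¬(a ∈ X ∧ b ∈ X) := by
    intro a ha b hb hab
    have hbFr : b ∈ Fr S C a := by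
      rw [hFr_eq a ha, mem_erase]
      exact ⟨fun h => hab h.symm, hb⟩
    exact (mem_filter.mp hbFr).2.2.2
  let U : Submodule (ZMod 2) Vv :=
    { carrier := ↑(insert (0:Vv) T)
      zero_mem' := by simp
      add_mem' := by
        intro a b ha hb
        simp only [Finset.coe_insert, Set.mem_insert_iff, Finset.mem_coe] at ha hb ⊢
        rcases ha with rfl | ha
        · rw [zero_add]; exact hb
        rcases hb with rfl | hb
        · rw [add_zero]; right; exact ha
        by_cases hab : a = b
        · left; rw [hab, vv_add_self]
        · right; exact haddT a ha b hb hab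
      smul_mem' := by
        intro c x hx
        have hc : c = 0 ∨ c = 1 := by revert c; decide
        rcases hc with rfl | rfl
        · rw [zero_smul]; simp
        · rw [one_smul]; exact hx }
  have hmemU : ∀ x, x ∈ U ↔ x = 0 ∨ x ∈ T := by
    intro x
    constructor
    · intro h
      have : x ∈ (↑(insert (0:Vv) T) : Set Vv) := h
      simpa using this
    · intro h
      show x ∈ (↑(insert (0:Vv) T) : Set Vv)
      simpa using h
  have hptsU : pts U = insert (0:Vv) T := by
    ext x
    rw [mem_pts, hmemU, mem_insert]
  have hUcard : 2 ^ finrank (ZMod 2) ↥U = 16 := by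
    rw [← pts_card, hptsU, card_insert_of_notMem h0T, hT15]
  have hU4 : finrank (ZMod 2) ↥U = 4 :=
    Nat.pow_right_injective (le_refl 2) hUcard
  refine ⟨U, hU4, ?_, ?_⟩
  · rw [eq_bot_iff]
    intro x hx
    obtain ⟨hxU, hxS⟩ := hx
    rcases (hmemU x).mp hxU with rfl | hxT
    · exact Submodule.zero_mem _
    · exact absurd hxS (by have := hTsub hxT; rw [PP, mem_filter] at this; exact this.2)
  · intro X hX
    by_contra hcon
    push_neg at hcon
    have h2 : 2 ≤ finrank (ZMod 2) ↥(U ⊓ X) := hcon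
    have hc4 : 4 ≤ (pts (U ⊓ X)).card := by
      rw [pts_card]
      calc (4:ℕ) = 2 ^ 2 := rfl
      _ ≤ 2 ^ finrank (ZMod 2) ↥(U ⊓ X) := Nat.pow_le_pow_right (by norm_num) h2
    have hlt : 1 < ((pts (U ⊓ X)) \ {0}).card := by
      have := card_sdiff_of_subset (show ({0}:Finset Vv) ⊆ pts (U ⊓ X) by
        simp [mem_pts, Submodule.zero_mem])
      have h1 : ({0}:Finset Vv).card = 1 := card_singleton _
      omega
    obtain ⟨a, ha, b, hb, hab⟩ := Finset.one_lt_card.mp hlt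
    rw [mem_sdiff, mem_pts, Submodule.mem_inf] at ha hb
    have ha0 : a ≠ 0 := by simpa using ha.2
    have hb0 : b ≠ 0 := by simpa using hb.2
    have haT : a ∈ T := by
      rcases (hmemU a).mp ha.1.1 with rfl | h
      · exact absurd rfl ha0
      · exact h
    have hbT : b ∈ T := by
      rcases (hmemU b).mp hb.1.1 with rfl | h
      · exact absurd rfl hb0
      · exact h
    exact hnoX a haT b hbT hab X hX ⟨ha.1.2, hb.1.2⟩

end Main2

end Stmt16Aux

/-- A set of 255 solids in `F_2^8` with minimum subspace distance 6 (pairwise intersections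
of dimension at most 1), all disjoint from a fixed solid `S`, extends by a further solid `U`
disjoint from `S` with `dim(U ∩ C') ≤ 1` for all `C' ∈ C`. -/
theorem stmt_16 (S : Submodule (ZMod 2) (Fin 8 → ZMod 2))
    (hS : finrank (ZMod 2) ↥S = 4)
    (C : Finset (Submodule (ZMod 2) (Fin 8 → ZMod 2)))
    (hcard : C.card = 255)
    (hdim : ∀ X ∈ C, finrank (ZMod 2) ↥X = 4)
    (hdist : ∀ X ∈ C, ∀ Y ∈ C, X ≠ Y → finrank (ZMod 2) ↥(X ⊓ Y) ≤ 1)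
    (hdisjS : ∀ X ∈ C, X ⊓ S = ⊥) :
    ∃ U : Submodule (ZMod 2) (Fin 8 → ZMod 2), finrank (ZMod 2) ↥U = 4 ∧
      U ⊓ S = ⊥ ∧ ∀ X ∈ C, finrank (ZMod 2) ↥(U ⊓ X) ≤ 1 := by
  exact Stmt16Aux.final hS hcard hdim hdist hdisjS
end

section
/- In F_2^8, a lifted MRD code of 4-subspaces with minimum rank distance 3 (e.g., the lifted Gabidulin code G_{8,4,3}) has cardinality 2^{4·(4−3+1)} = 256 and covers every line of F_2^8 disjoint from the special solid S = {0} × F_{2^4} exactly once: for every 2-subspace L of F_2^8 with L∩S = 0 there is exactly one codeword containing L. -/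
/-!
Over a field `K` of characteristic 2, `x ↦ a₀x + a₁x²` is `𝔽₂`-linear, so `G(a₀, a₁)` is the graph
of an `𝔽₂`-linear map and has dimension `dim K = 4`. Everything else rests on one interpolation
fact: for distinct nonzero `x₁, x₂` the `K`-linear map `(a₀, a₁) ↦ (a₀x₁ + a₁x₁², a₀x₂ + a₁x₂²)`
is injective (if both values vanish, the line `a₀ + a₁X` has two roots), hence bijective.
Injectivity says that two distinct codewords share no two points with distinct nonzero first
coordinates, so they meet in dimension at most 1; in particular `(a₀, a₁) ↦ G(a₀, a₁)` is
injective and there are `16² = 256` codewords. A line `L` with `L ∩ S = 0` projects injectively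
onto the first factor, so a basis `u, v` of `L` has distinct nonzero first coordinates, and
bijectivity gives exactly one `(a₀, a₁)` with `u, v ∈ G(a₀, a₁)`.
-/

open Module

/-- The underlying set of the Gabidulin codeword `G(a₀,a₁) = {(x, a₀x + a₁x²) : x ∈ F₁₆}`
inside `F_2^8 = F₁₆ × F₁₆`. -/
def gabCarrier (a₀ a₁ : GaloisField 2 4) : Set (GaloisField 2 4 × GaloisField 2 4) :=
  {p | ∃ x : GaloisField 2 4, p = (x, a₀ * x + a₁ * x ^ 2)}

/-- A subspace of `F_2^8 = F₁₆ × F₁₆` is a codeword of the lifted Gabidulin code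
`G_{8,4,3}` if its carrier is `{(x, a₀x + a₁x²) : x}` for some `a₀, a₁ ∈ F₁₆`. -/
def IsGabCodeword (U : Submodule (ZMod 2) (GaloisField 2 4 × GaloisField 2 4)) : Prop :=
  ∃ a₀ a₁ : GaloisField 2 4, (U : Set (GaloisField 2 4 × GaloisField 2 4)) =
    gabCarrier a₀ a₁

open Function

section Interpolation

variable {K : Type*} [Field K]

def evalAtPair (x₁ x₂ : K) : K × K →ₗ[K] K × K :=
  (x₁ • LinearMap.fst K K K + x₁ ^ 2 • LinearMap.snd K K K).prod
    (x₂ • LinearMap.fst K K K + x₂ ^ 2 • LinearMap.snd K K K)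

@[simp]
lemma evalAtPair_apply (x₁ x₂ : K) (a : K × K) :
    evalAtPair x₁ x₂ a = (a.1 * x₁ + a.2 * x₁ ^ 2, a.1 * x₂ + a.2 * x₂ ^ 2) := by
  simp [evalAtPair, mul_comm]

lemma evalAtPair_injective {x₁ x₂ : K} (h₁ : x₁ ≠ 0) (h₂ : x₂ ≠ 0) (h₁₂ : x₁ ≠ x₂) :
    Injective (evalAtPair x₁ x₂) := by
  refine (injective_iff_map_eq_zero _).2 fun a ha => ?_
  simp only [evalAtPair_apply, Prod.mk_eq_zero] at ha
  have hline : ∀ x ≠ 0, a.1 * x + a.2 * x ^ 2 = 0 → a.1 + a.2 * x = 0 := fun x hx h =>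
    (mul_eq_zero.1 (by linear_combination h : x * (a.1 + a.2 * x) = 0)).resolve_left hx
  have e₁ := hline x₁ h₁ ha.1
  have e₂ := hline x₂ h₂ ha.2
  have ha₂ : a.2 = 0 :=
    (mul_eq_zero.1 (by linear_combination e₁ - e₂ : a.2 * (x₁ - x₂) = 0)).resolve_right
      (sub_ne_zero.2 h₁₂)
  have ha₁ : a.1 = 0 := by simpa [ha₂] using e₁
  exact Prod.ext ha₁ ha₂

lemma evalAtPair_bijective {x₁ x₂ : K} (h₁ : x₁ ≠ 0) (h₂ : x₂ ≠ 0) (h₁₂ : x₁ ≠ x₂) :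
    Bijective (evalAtPair x₁ x₂) :=
  ⟨evalAtPair_injective h₁ h₂ h₁₂,
    LinearMap.injective_iff_surjective.1 (evalAtPair_injective h₁ h₂ h₁₂)⟩

end Interpolation

section LinearAlgebra

variable {R M N : Type*}

lemma finrank_le_one_of_forall_ne_zero_eq [DivisionRing R] [AddCommGroup M] [Module R M]
    (h : ∀ x y : M, x ≠ 0 → y ≠ 0 → x = y) : finrank R M ≤ 1 := by
  by_cases hM : ∀ v : M, v = 0
  · exact finrank_le_one 0 fun w => ⟨0, by rw [zero_smul, hM w]⟩
  obtain ⟨v, hv⟩ := not_forall.1 hM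
  refine finrank_le_one v fun w => ?_
  by_cases hw : w = 0
  · exact ⟨0, by rw [zero_smul, hw]⟩
  · exact ⟨1, by rw [one_smul, h v w hv hw]⟩

lemma Submodule.exists_pair_le_span_of_finrank_eq_two [DivisionRing R] [AddCommGroup M]
    [Module R M] {L : Submodule R M} (hL : finrank R L = 2) :
    ∃ u ∈ L, ∃ v ∈ L, u ≠ 0 ∧ v ≠ 0 ∧ u ≠ v ∧ L ≤ span R {u, v} := by
  have : Module.Finite R L := Module.finite_of_finrank_eq_succ hL
  let b := Module.finBasisOfFinrankEq R L hL
  refine ⟨b 0, (b 0).2, b 1, (b 1).2, by simpa using b.ne_zero 0, by simpa using b.ne_zero 1,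
    fun h => zero_ne_one (b.injective (Subtype.ext h)), fun w hw => ?_⟩
  rw [Submodule.mem_span_pair]
  refine ⟨b.repr ⟨w, hw⟩ 0, b.repr ⟨w, hw⟩ 1, ?_⟩
  have h := congrArg Subtype.val (b.sum_repr ⟨w, hw⟩)
  rwa [Fin.sum_univ_two, Submodule.coe_add, Submodule.coe_smul, Submodule.coe_smul] at h

lemma Submodule.injOn_fst_of_inf_eq_bot [Ring R] [AddCommGroup M] [Module R M]
    [AddCommGroup N] [Module R N] {L : Submodule R (M × N)}
    (hL : L ⊓ (⊥ : Submodule R M).prod ⊤ = ⊥) :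
    Set.InjOn Prod.fst (L : Set (M × N)) := by
  intro p hp q hq h
  have hpq : p - q ∈ L ⊓ (⊥ : Submodule R M).prod ⊤ :=
    ⟨L.sub_mem hp hq, Submodule.mem_prod.2 ⟨by simp [h], trivial⟩⟩
  rw [hL, Submodule.mem_bot, sub_eq_zero] at hpq
  exact hpq

lemma LinearMap.injOn_fst_graph [Semiring R] [AddCommMonoid M] [Module R M]
    [AddCommMonoid N] [Module R N] (f : M →ₗ[R] N) :
    Set.InjOn Prod.fst (f.graph : Set (M × N)) := fun p hp q hq h =>
  Prod.ext h (by rw [(f.mem_graph_iff p).1 hp, (f.mem_graph_iff q).1 hq, h])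

end LinearAlgebra

section Gabidulin

variable {K : Type*} [Field K] [CharP K 2] [Module (ZMod 2) K]

def linearizedMap (a : K × K) : K →ₗ[ZMod 2] K :=
  AddMonoidHom.toZModLinearMap 2
    { toFun := fun x => a.1 * x + a.2 * x ^ 2
      map_zero' := by ring
      map_add' := fun x y => by rw [add_pow_char]; ring }

-- The paper's `G(a₀, a₁)`, with `F_2^8` modelled as `K × K`.
def gabCodeword (a : K × K) : Submodule (ZMod 2) (K × K) := (linearizedMap a).graph

lemma mem_gabCodeword {a p : K × K} : p ∈ gabCodeword a ↔ p.2 = a.1 * p.1 + a.2 * p.1 ^ 2 :=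
  (linearizedMap a).mem_graph_iff p

lemma finrank_gabCodeword (a : K × K) :
    finrank (ZMod 2) (gabCodeword a) = finrank (ZMod 2) K := by
  rw [gabCodeword, LinearMap.graph_eq_range_prod]
  exact LinearMap.finrank_range_of_inj fun x y h => congrArg Prod.fst h

lemma finrank_gabCodeword_inf_le_one {a b : K × K} (hab : a ≠ b) :
    finrank (ZMod 2) ↥(gabCodeword a ⊓ gabCodeword b) ≤ 1 := by
  refine finrank_le_one_of_forall_ne_zero_eq fun ⟨p, hpa, hpb⟩ ⟨q, hqa, hqb⟩ hp hq => ?_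
  have hinj := (linearizedMap a).injOn_fst_graph
  have hp₁ : p.1 ≠ 0 := fun h => hp (Subtype.ext (hinj hpa (gabCodeword a).zero_mem h))
  have hq₁ : q.1 ≠ 0 := fun h => hq (Subtype.ext (hinj hqa (gabCodeword a).zero_mem h))
  refine Subtype.ext (hinj hpa hqa (not_not.1 fun hpq => hab ?_))
  apply evalAtPair_injective hp₁ hq₁ hpq
  rw [evalAtPair_apply, evalAtPair_apply, ← mem_gabCodeword.1 hpa, ← mem_gabCodeword.1 hqa,
    ← mem_gabCodeword.1 hpb, ← mem_gabCodeword.1 hqb]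

lemma gabCodeword_injective (hK : 1 < finrank (ZMod 2) K) :
    Injective (gabCodeword (K := K)) := by
  intro a b hab
  by_contra hne
  have := finrank_gabCodeword_inf_le_one hne
  rw [hab, inf_idem, finrank_gabCodeword] at this
  omega

lemma existsUnique_le_gabCodeword {L : Submodule (ZMod 2) (K × K)} (hL : finrank (ZMod 2) L = 2)
    (hS : L ⊓ (⊥ : Submodule (ZMod 2) K).prod ⊤ = ⊥) : ∃! a : K × K, L ≤ gabCodeword a := by
  obtain ⟨u, hu, v, hv, hu₀, hv₀, huv, hspan⟩ :=
    Submodule.exists_pair_le_span_of_finrank_eq_two hL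
  have hinj := Submodule.injOn_fst_of_inf_eq_bot hS
  have hu₁ : u.1 ≠ 0 := fun h => hu₀ (hinj hu L.zero_mem h)
  have hv₁ : v.1 ≠ 0 := fun h => hv₀ (hinj hv L.zero_mem h)
  have hle_iff : ∀ a, L ≤ gabCodeword a ↔ evalAtPair u.1 v.1 a = (u.2, v.2) := fun a => by
    rw [evalAtPair_apply, Prod.mk.injEq, eq_comm, eq_comm (b := v.2), ← mem_gabCodeword,
      ← mem_gabCodeword]
    refine ⟨fun h => ⟨h hu, h hv⟩, fun ⟨hua, hva⟩ => hspan.trans ?_⟩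
    rw [Submodule.span_le, Set.insert_subset_iff, Set.singleton_subset_iff]
    exact ⟨hua, hva⟩
  simpa only [hle_iff] using
    (evalAtPair_bijective hu₁ hv₁ fun h => huv (hinj hu hv h)).existsUnique (u.2, v.2)

end Gabidulin

lemma coe_gabCodeword (a : GaloisField 2 4 × GaloisField 2 4) :
    (gabCodeword a : Set (GaloisField 2 4 × GaloisField 2 4)) = gabCarrier a.1 a.2 := by
  ext ⟨x, y⟩
  simp [gabCarrier, mem_gabCodeword]

lemma isGabCodeword_iff (U : Submodule (ZMod 2) (GaloisField 2 4 × GaloisField 2 4)) :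
    IsGabCodeword U ↔ U ∈ Set.range gabCodeword :=
  ⟨fun ⟨a₀, a₁, h⟩ => ⟨(a₀, a₁), SetLike.coe_injective (by rw [coe_gabCodeword, h])⟩,
    fun ⟨a, h⟩ => ⟨a.1, a.2, by rw [← h, coe_gabCodeword]⟩⟩

/-- The lifted Gabidulin code `G_{8,4,3}` in `F_2^8` has exactly `2^{4·(4-3+1)} = 256`
codewords, each of dimension 4; any two distinct codewords intersect in dimension at most 1
(subspace distance ≥ 6); and every line of `F_2^8` disjoint from the special solid
`S = {0} × F₁₆` is contained in exactly one codeword. -/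
theorem stmt_19 :
    Nat.card {U : Submodule (ZMod 2) (GaloisField 2 4 × GaloisField 2 4) //
      IsGabCodeword U} = 2 ^ (4 * (4 - 3 + 1)) ∧
    (∀ U : Submodule (ZMod 2) (GaloisField 2 4 × GaloisField 2 4), IsGabCodeword U →
      finrank (ZMod 2) ↥U = 4) ∧
    (∀ U U' : Submodule (ZMod 2) (GaloisField 2 4 × GaloisField 2 4),
      IsGabCodeword U → IsGabCodeword U' → U ≠ U' →
      finrank (ZMod 2) ↥(U ⊓ U') ≤ 1) ∧
    (∀ L : Submodule (ZMod 2) (GaloisField 2 4 × GaloisField 2 4),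
      finrank (ZMod 2) ↥L = 2 →
      L ⊓ ((⊥ : Submodule (ZMod 2) (GaloisField 2 4)).prod
        (⊤ : Submodule (ZMod 2) (GaloisField 2 4))) = ⊥ →
      ∃! U : Submodule (ZMod 2) (GaloisField 2 4 × GaloisField 2 4),
        IsGabCodeword U ∧ L ≤ U) := by
  have hfinrank : finrank (ZMod 2) (GaloisField 2 4) = 4 := GaloisField.finrank 2 (by norm_num)
  refine ⟨?_, ?_, ?_, ?_⟩
  · rw [Nat.card_congr (Equiv.subtypeEquivRight isGabCodeword_iff),
      Nat.card_range_of_injective (gabCodeword_injective (by omega)), Nat.card_prod,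
      GaloisField.card 2 4 (by norm_num)]
    norm_num
  · intro U hU
    obtain ⟨a, rfl⟩ := (isGabCodeword_iff U).1 hU
    rw [finrank_gabCodeword, hfinrank]
  · rintro U U' hU hU' hne
    obtain ⟨a, rfl⟩ := (isGabCodeword_iff U).1 hU
    obtain ⟨b, rfl⟩ := (isGabCodeword_iff U').1 hU'
    exact finrank_gabCodeword_inf_le_one (ne_of_apply_ne gabCodeword hne)
  · intro L hL hS
    obtain ⟨a, ha, huniq⟩ := existsUnique_le_gabCodeword hL hS
    refine ⟨gabCodeword a, ⟨(isGabCodeword_iff _).2 ⟨a, rfl⟩, ha⟩, ?_⟩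
    rintro U ⟨hU, hLU⟩
    obtain ⟨b, rfl⟩ := (isGabCodeword_iff U).1 hU
    rw [huniq b hLU]
end
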